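/- arXiv:2104.14266 — 2 statements merged into one kernel-verified Lean document; each statement's English description precedes it below -/
import Mathlib

section
/- For every finite set Γ of MSO formulas, all finite sequences X⃗, Y⃗ of second-order variables, all MSO formulas φ₁, φ₂, and all step-wMSO formulas Ψ₁, Ψ₂, there exist a finite sequence Z⃗ of second-order variables, an MSO formula φ₃, and a step-wMSO formula Ψ₃ such that Γ ⊢ Σ_{X⃗}(φ₁ ? ∏_x Ψ₁ : 𝟬) + Σ_{Y⃗}(φ₂ ? ∏_x Ψ₂ : 𝟬) ≈ Σ_{Z⃗}(φ₃ ? ∏_x Ψ₃ : 𝟬) is derivable in the core-wMSO proof system. -/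
namespace WMSO

/-- MSO formulas over alphabet `A`; first- and second-order variables are `ℕ`. -/
inductive MSO (A : Type) : Type
  | top : MSO A
  | pred : A → ℕ → MSO A
  | le : ℕ → ℕ → MSO A
  | mem : ℕ → ℕ → MSO A
  | not : MSO A → MSO A
  | and : MSO A → MSO A → MSO A
  | allFO : ℕ → MSO A → MSO A
  | allSO : ℕ → MSO A → MSO A

/-- A nonempty word over `A` together with a valuation of first-order variables
(positions of the word) and second-order variables (sets of positions):
an element of `Σ⁺_val`. -/
structure WVal (A : Type) : Type where
  word : List A
  nonempty : word ≠ []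
  fo : ℕ → Fin word.length
  so : ℕ → Finset (Fin word.length)

variable {A R : Type}

def WVal.updFO (m : WVal A) (x : ℕ) (i : Fin m.word.length) : WVal A :=
  { m with fo := Function.update m.fo x i }

def WVal.updSO (m : WVal A) (X : ℕ) (I : Finset (Fin m.word.length)) : WVal A :=
  { m with so := Function.update m.so X I }

/-- Standard MSO satisfaction over pairs `(w,σ)`. -/
def MSO.Sat : MSO A → WVal A → Prop
  | .top, _ => True
  | .pred a x, m => m.word.get (m.fo x) = a
  | .le x y, m => (m.fo x : ℕ) ≤ (m.fo y : ℕ)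
  | .mem x X, m => m.fo x ∈ m.so X
  | .not φ, m => ¬ φ.Sat m
  | .and φ ψ, m => φ.Sat m ∧ ψ.Sat m
  | .allFO x φ, m => ∀ i, φ.Sat (m.updFO x i)
  | .allSO X φ, m => ∀ I, φ.Sat (m.updSO X I)

/-- `(w,σ)` satisfies every formula in `Γ`. -/
def SatAll (Γ : Set (MSO A)) (m : WVal A) : Prop := ∀ φ ∈ Γ, φ.Sat m

/-- Semantic entailment for MSO (which, by completeness of MSO over finite
words, coincides with derivability). -/
def Entails (Γ : Set (MSO A)) (φ : MSO A) : Prop := ∀ m : WVal A, SatAll Γ m → φ.Sat m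

/-- Disjunction as a derived MSO connective. -/
def MSO.or (φ ψ : MSO A) : MSO A := .not (.and (.not φ) (.not ψ))

/-- `⋁` over a list of MSO formulas; the empty disjunction is `¬⊤`. -/
def bigOr : List (MSO A) → MSO A
  | [] => .not .top
  | φ :: l => φ.or (bigOr l)

/-! ### Variable occurrences and renaming -/

/-- First-order variable `x` occurs free in an MSO formula. -/
def MSO.FreeFO (x : ℕ) : MSO A → Prop
  | .top => False
  | .pred _ z => z = x
  | .le z w => z = x ∨ w = x
  | .mem z _ => z = x
  | .not φ => φ.FreeFO x
  | .and φ ψ => φ.FreeFO x ∨ ψ.FreeFO x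
  | .allFO z φ => z ≠ x ∧ φ.FreeFO x
  | .allSO _ φ => φ.FreeFO x

/-- Second-order variable `X` occurs free in an MSO formula. -/
def MSO.FreeSO (X : ℕ) : MSO A → Prop
  | .top => False
  | .pred _ _ => False
  | .le _ _ => False
  | .mem _ Z => Z = X
  | .not φ => φ.FreeSO X
  | .and φ ψ => φ.FreeSO X ∨ ψ.FreeSO X
  | .allFO _ φ => φ.FreeSO X
  | .allSO Z φ => Z ≠ X ∧ φ.FreeSO X

/-- First-order variable `y` occurs (anywhere) in an MSO formula. -/
def MSO.OccFO (y : ℕ) : MSO A → Prop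
  | .top => False
  | .pred _ z => z = y
  | .le z w => z = y ∨ w = y
  | .mem z _ => z = y
  | .not φ => φ.OccFO y
  | .and φ ψ => φ.OccFO y ∨ ψ.OccFO y
  | .allFO z φ => z = y ∨ φ.OccFO y
  | .allSO _ φ => φ.OccFO y

/-- Second-order variable `Y` occurs (anywhere) in an MSO formula. -/
def MSO.OccSO (Y : ℕ) : MSO A → Prop
  | .top => False
  | .pred _ _ => False
  | .le _ _ => False
  | .mem _ Z => Z = Y
  | .not φ => φ.OccSO Y
  | .and φ ψ => φ.OccSO Y ∨ ψ.OccSO Y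
  | .allFO _ φ => φ.OccSO Y
  | .allSO Z φ => Z = Y ∨ φ.OccSO Y

/-- Replace the variable `x` by `y`. -/
def rn (x y z : ℕ) : ℕ := if z = x then y else z

/-- Replace the first-order variable `x` by `y` everywhere in an MSO formula. -/
def MSO.renFO (x y : ℕ) : MSO A → MSO A
  | .top => .top
  | .pred a z => .pred a (rn x y z)
  | .le z w => .le (rn x y z) (rn x y w)
  | .mem z X => .mem (rn x y z) X
  | .not φ => .not (φ.renFO x y)
  | .and φ ψ => .and (φ.renFO x y) (ψ.renFO x y)
  | .allFO z φ => .allFO (rn x y z) (φ.renFO x y)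
  | .allSO X φ => .allSO X (φ.renFO x y)

/-- Replace the second-order variable `X` by `Y` everywhere in an MSO formula. -/
def MSO.renSO (X Y : ℕ) : MSO A → MSO A
  | .top => .top
  | .pred a z => .pred a z
  | .le z w => .le z w
  | .mem z Z => .mem z (rn X Y Z)
  | .not φ => .not (φ.renSO X Y)
  | .and φ ψ => .and (φ.renSO X Y) (ψ.renSO X Y)
  | .allFO z φ => .allFO z (φ.renSO X Y)
  | .allSO Z φ => .allSO (rn X Y Z) (φ.renSO X Y)

/-! ### step-wMSO -/

/-- step-wMSO formulas: `Ψ ::= r | φ ? Ψ₁ : Ψ₂`. -/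
inductive Step (A R : Type) : Type
  | const : R → Step A R
  | ite : MSO A → Step A R → Step A R → Step A R

open Classical in
/-- Semantics of step-wMSO. -/
noncomputable def Step.sem : Step A R → WVal A → R
  | .const r, _ => r
  | .ite φ Ψ₁ Ψ₂, m => if φ.Sat m then Ψ₁.sem m else Ψ₂.sem m

/-- `Ψ₁ ∼_Γ Ψ₂` for step-wMSO. -/
def StepEquiv (Γ : Set (MSO A)) (Ψ₁ Ψ₂ : Step A R) : Prop :=
  ∀ m : WVal A, SatAll Γ m → Ψ₁.sem m = Ψ₂.sem m

/-- `y` occurs in a step-wMSO formula (as a first-order variable). -/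
def Step.OccFO (y : ℕ) : Step A R → Prop
  | .const _ => False
  | .ite φ Ψ₁ Ψ₂ => φ.OccFO y ∨ Ψ₁.OccFO y ∨ Ψ₂.OccFO y

/-- `Y` occurs in a step-wMSO formula (as a second-order variable). -/
def Step.OccSO (Y : ℕ) : Step A R → Prop
  | .const _ => False
  | .ite φ Ψ₁ Ψ₂ => φ.OccSO Y ∨ Ψ₁.OccSO Y ∨ Ψ₂.OccSO Y

/-- Replace the first-order variable `x` by `y` in a step-wMSO formula. -/
def Step.renFO (x y : ℕ) : Step A R → Step A R
  | .const r => .const r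
  | .ite φ Ψ₁ Ψ₂ => .ite (φ.renFO x y) (Ψ₁.renFO x y) (Ψ₂.renFO x y)

/-- Replace the second-order variable `X` by `Y` in a step-wMSO formula. -/
def Step.renSO (X Y : ℕ) : Step A R → Step A R
  | .const r => .const r
  | .ite φ Ψ₁ Ψ₂ => .ite (φ.renSO X Y) (Ψ₁.renSO X Y) (Ψ₂.renSO X Y)

/-- The set `R(Ψ)` of weights occurring in a step-wMSO formula. -/
def Step.weights [DecidableEq R] : Step A R → Finset R
  | .const r => {r}
  | .ite _ Ψ₁ Ψ₂ => Ψ₁.weights ∪ Ψ₂.weights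

/-- The MSO formula `φ(Ψ,r)` characterizing `⟦Ψ⟧ = r`. -/
def phiOf [DecidableEq R] : Step A R → R → MSO A
  | .const r', r => if r' = r then .top else .not .top
  | .ite φ' Ψ₁ Ψ₂, r => (MSO.and φ' (phiOf Ψ₁ r)).or (MSO.and (.not φ') (phiOf Ψ₂ r))

/-- The equational proof system for step-wMSO: equational logic
(refl, symm, trans, congruence for the conditional) plus axioms (S1)–(S4),
where the MSO side condition of (S3) is semantic entailment. -/
inductive StepDeriv : Set (MSO A) → Step A R → Step A R → Prop
  | refl (Γ : Set (MSO A)) (Ψ : Step A R) : StepDeriv Γ Ψ Ψ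
  | symm {Γ Ψ₁ Ψ₂} : StepDeriv Γ Ψ₁ Ψ₂ → StepDeriv Γ Ψ₂ Ψ₁
  | trans {Γ Ψ₁ Ψ₂ Ψ₃} : StepDeriv Γ Ψ₁ Ψ₂ → StepDeriv Γ Ψ₂ Ψ₃ → StepDeriv Γ Ψ₁ Ψ₃
  | congIte {Γ Ψ₁ Ψ₁' Ψ₂ Ψ₂'} (φ : MSO A) :
      StepDeriv Γ Ψ₁ Ψ₁' → StepDeriv Γ Ψ₂ Ψ₂' →
      StepDeriv Γ (.ite φ Ψ₁ Ψ₂) (.ite φ Ψ₁' Ψ₂')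
  | s1 {Γ Ψ₁ Ψ₂} (φ : MSO A) : StepDeriv Γ Ψ₁ Ψ₂ → StepDeriv (insert φ Γ) Ψ₁ Ψ₂
  | s2 (Γ : Set (MSO A)) (φ : MSO A) (Ψ₁ Ψ₂ : Step A R) :
      StepDeriv Γ (.ite (.not φ) Ψ₁ Ψ₂) (.ite φ Ψ₂ Ψ₁)
  | s3 {Γ : Set (MSO A)} {φ : MSO A} (Ψ₁ Ψ₂ : Step A R) :
      Entails Γ φ → StepDeriv Γ (.ite φ Ψ₁ Ψ₂) Ψ₁
  | s4 {Γ : Set (MSO A)} {φ : MSO A} {Ψ₁ Ψ₂ Ψ : Step A R} :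
      StepDeriv (insert φ Γ) Ψ₁ Ψ → StepDeriv (insert (.not φ) Γ) Ψ₂ Ψ →
      StepDeriv Γ (.ite φ Ψ₁ Ψ₂) Ψ

/-! ### core-wMSO -/

/-- core-wMSO formulas. -/
inductive Core (A R : Type) : Type
  | zero : Core A R
  | prod : ℕ → Step A R → Core A R
  | ite : MSO A → Core A R → Core A R → Core A R
  | add : Core A R → Core A R → Core A R
  | sumFO : ℕ → Core A R → Core A R
  | sumSO : ℕ → Core A R → Core A R

open Classical in
/-- Abstract semantics of core-wMSO, valued in finite multisets of words over `R`. -/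
noncomputable def Core.sem : Core A R → WVal A → Multiset (List R)
  | .zero, _ => 0
  | .prod x Ψ, m => {List.ofFn (fun i : Fin m.word.length => Ψ.sem (m.updFO x i))}
  | .ite φ Φ₁ Φ₂, m => if φ.Sat m then Φ₁.sem m else Φ₂.sem m
  | .add Φ₁ Φ₂, m => Φ₁.sem m + Φ₂.sem m
  | .sumFO x Φ, m => ∑ i : Fin m.word.length, Φ.sem (m.updFO x i)
  | .sumSO X Φ, m => ∑ I : Finset (Fin m.word.length), Φ.sem (m.updSO X I)

/-- `Φ₁ ∼_Γ Φ₂` for core-wMSO. -/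
def CoreEquiv (Γ : Set (MSO A)) (Φ₁ Φ₂ : Core A R) : Prop :=
  ∀ m : WVal A, SatAll Γ m → Φ₁.sem m = Φ₂.sem m

/-- The set of weights occurring in a core-wMSO formula. -/
def Core.weights [DecidableEq R] : Core A R → Finset R
  | .zero => ∅
  | .prod _ Ψ => Ψ.weights
  | .ite _ Φ₁ Φ₂ => Φ₁.weights ∪ Φ₂.weights
  | .add Φ₁ Φ₂ => Φ₁.weights ∪ Φ₂.weights
  | .sumFO _ Φ => Φ.weights
  | .sumSO _ Φ => Φ.weights

/-- `y` occurs in a core-wMSO formula as a first-order variable. -/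
def Core.OccFO (y : ℕ) : Core A R → Prop
  | .zero => False
  | .prod z Ψ => z = y ∨ Ψ.OccFO y
  | .ite φ Φ₁ Φ₂ => φ.OccFO y ∨ Φ₁.OccFO y ∨ Φ₂.OccFO y
  | .add Φ₁ Φ₂ => Φ₁.OccFO y ∨ Φ₂.OccFO y
  | .sumFO z Φ => z = y ∨ Φ.OccFO y
  | .sumSO _ Φ => Φ.OccFO y

/-- `Y` occurs in a core-wMSO formula as a second-order variable. -/
def Core.OccSO (Y : ℕ) : Core A R → Prop
  | .zero => False
  | .prod _ Ψ => Ψ.OccSO Y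
  | .ite φ Φ₁ Φ₂ => φ.OccSO Y ∨ Φ₁.OccSO Y ∨ Φ₂.OccSO Y
  | .add Φ₁ Φ₂ => Φ₁.OccSO Y ∨ Φ₂.OccSO Y
  | .sumFO _ Φ => Φ.OccSO Y
  | .sumSO Z Φ => Z = Y ∨ Φ.OccSO Y

/-- Replace the first-order variable `x` by `y` in a core-wMSO formula. -/
def Core.renFO (x y : ℕ) : Core A R → Core A R
  | .zero => .zero
  | .prod z Ψ => .prod (rn x y z) (Ψ.renFO x y)
  | .ite φ Φ₁ Φ₂ => .ite (φ.renFO x y) (Φ₁.renFO x y) (Φ₂.renFO x y)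
  | .add Φ₁ Φ₂ => .add (Φ₁.renFO x y) (Φ₂.renFO x y)
  | .sumFO z Φ => .sumFO (rn x y z) (Φ.renFO x y)
  | .sumSO Z Φ => .sumSO Z (Φ.renFO x y)

/-- Replace the second-order variable `X` by `Y` in a core-wMSO formula. -/
def Core.renSO (X Y : ℕ) : Core A R → Core A R
  | .zero => .zero
  | .prod z Ψ => .prod z (Ψ.renSO X Y)
  | .ite φ Φ₁ Φ₂ => .ite (φ.renSO X Y) (Φ₁.renSO X Y) (Φ₂.renSO X Y)
  | .add Φ₁ Φ₂ => .add (Φ₁.renSO X Y) (Φ₂.renSO X Y)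
  | .sumFO z Φ => .sumFO z (Φ.renSO X Y)
  | .sumSO Z Φ => .sumSO (rn X Y Z) (Φ.renSO X Y)

/-- core-wMSO formulas with no occurrence of the binary sum `+`
(second normal form). -/
def Core.noAdd : Core A R → Prop
  | .zero => True
  | .prod _ _ => True
  | .ite _ Φ₁ Φ₂ => Φ₁.noAdd ∧ Φ₂.noAdd
  | .add _ _ => False
  | .sumFO _ Φ => Φ.noAdd
  | .sumSO _ Φ => Φ.noAdd

/-! ### The fragment core-wMSO(?,+) -/

/-- core-wMSO(?,+) formulas: `Φ ::= 𝟬 | ∏_x Ψ | φ ? Φ₁ : Φ₂ | Φ₁ + Φ₂`. -/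
inductive CoreP (A R : Type) : Type
  | zero : CoreP A R
  | prod : ℕ → Step A R → CoreP A R
  | ite : MSO A → CoreP A R → CoreP A R → CoreP A R
  | add : CoreP A R → CoreP A R → CoreP A R

open Classical in
/-- Abstract semantics of core-wMSO(?,+). -/
noncomputable def CoreP.sem : CoreP A R → WVal A → Multiset (List R)
  | .zero, _ => 0
  | .prod x Ψ, m => {List.ofFn (fun i : Fin m.word.length => Ψ.sem (m.updFO x i))}
  | .ite φ Φ₁ Φ₂, m => if φ.Sat m then Φ₁.sem m else Φ₂.sem m
  | .add Φ₁ Φ₂, m => Φ₁.sem m + Φ₂.sem m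

/-- `Φ₁ ∼_Γ Φ₂` for core-wMSO(?,+). -/
def CorePEquiv (Γ : Set (MSO A)) (Φ₁ Φ₂ : CoreP A R) : Prop :=
  ∀ m : WVal A, SatAll Γ m → Φ₁.sem m = Φ₂.sem m

/-- `y` occurs in a core-wMSO(?,+) formula as a first-order variable. -/
def CoreP.OccFO (y : ℕ) : CoreP A R → Prop
  | .zero => False
  | .prod z Ψ => z = y ∨ Ψ.OccFO y
  | .ite φ Φ₁ Φ₂ => φ.OccFO y ∨ Φ₁.OccFO y ∨ Φ₂.OccFO y
  | .add Φ₁ Φ₂ => Φ₁.OccFO y ∨ Φ₂.OccFO y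

/-- The equational proof system for core-wMSO(?,+): equational logic
(refl, symm, trans, congruence for `?` and `+`) plus axioms (C1)–(C10),
where MSO side conditions are semantic entailment. -/
inductive CorePDeriv : Set (MSO A) → CoreP A R → CoreP A R → Prop
  | refl (Γ : Set (MSO A)) (Φ : CoreP A R) : CorePDeriv Γ Φ Φ
  | symm {Γ Φ₁ Φ₂} : CorePDeriv Γ Φ₁ Φ₂ → CorePDeriv Γ Φ₂ Φ₁
  | trans {Γ Φ₁ Φ₂ Φ₃} : CorePDeriv Γ Φ₁ Φ₂ → CorePDeriv Γ Φ₂ Φ₃ → CorePDeriv Γ Φ₁ Φ₃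
  | congIte {Γ Φ₁ Φ₁' Φ₂ Φ₂'} (φ : MSO A) :
      CorePDeriv Γ Φ₁ Φ₁' → CorePDeriv Γ Φ₂ Φ₂' →
      CorePDeriv Γ (.ite φ Φ₁ Φ₂) (.ite φ Φ₁' Φ₂')
  | congAdd {Γ Φ₁ Φ₁' Φ₂ Φ₂'} :
      CorePDeriv Γ Φ₁ Φ₁' → CorePDeriv Γ Φ₂ Φ₂' →
      CorePDeriv Γ (.add Φ₁ Φ₂) (.add Φ₁' Φ₂')
  | c1 (Γ : Set (MSO A)) (Φ : CoreP A R) : CorePDeriv Γ (Φ.add .zero) Φ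
  | c2 (Γ : Set (MSO A)) (Φ₁ Φ₂ : CoreP A R) : CorePDeriv Γ (Φ₁.add Φ₂) (Φ₂.add Φ₁)
  | c3 (Γ : Set (MSO A)) (Φ₁ Φ₂ Φ₃ : CoreP A R) :
      CorePDeriv Γ ((Φ₁.add Φ₂).add Φ₃) (Φ₁.add (Φ₂.add Φ₃))
  | c4 {Γ : Set (MSO A)} {Ψ₁ Ψ₂ : Step A R} (x : ℕ) :
      (∀ ψ ∈ Γ, ¬ ψ.FreeFO x) → StepDeriv Γ Ψ₁ Ψ₂ →
      CorePDeriv Γ (.prod x Ψ₁) (.prod x Ψ₂)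
  | c5 (Γ : Set (MSO A)) (x y : ℕ) (Ψ : Step A R) :
      ¬ Ψ.OccFO y → CorePDeriv Γ (.prod x Ψ) (.prod y (Ψ.renFO x y))
  | c6 {Γ Φ₁ Φ₂} (φ : MSO A) : CorePDeriv Γ Φ₁ Φ₂ → CorePDeriv (insert φ Γ) Φ₁ Φ₂
  | c7 (Γ : Set (MSO A)) (φ : MSO A) (Φ₁ Φ₂ : CoreP A R) :
      CorePDeriv Γ (.ite (.not φ) Φ₁ Φ₂) (.ite φ Φ₂ Φ₁)
  | c8 {Γ : Set (MSO A)} {φ : MSO A} (Φ₁ Φ₂ : CoreP A R) :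
      Entails Γ φ → CorePDeriv Γ (.ite φ Φ₁ Φ₂) Φ₁
  | c9 {Γ : Set (MSO A)} {φ : MSO A} {Φ₁ Φ₂ Φ : CoreP A R} :
      CorePDeriv (insert φ Γ) Φ₁ Φ → CorePDeriv (insert (.not φ) Γ) Φ₂ Φ →
      CorePDeriv Γ (.ite φ Φ₁ Φ₂) Φ
  | c10 (Γ : Set (MSO A)) (φ : MSO A) (Φ' Φ'' Φ : CoreP A R) :
      CorePDeriv Γ ((CoreP.ite φ Φ' Φ'').add Φ) (.ite φ (Φ'.add Φ) (Φ''.add Φ))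

/-- Normal-form `M`-layer: `M ::= ∏_x Ψ | M₁ + M₂`. -/
inductive IsM : CoreP A R → Prop
  | prod (x : ℕ) (Ψ : Step A R) : IsM (.prod x Ψ)
  | add {M₁ M₂ : CoreP A R} : IsM M₁ → IsM M₂ → IsM (M₁.add M₂)

/-- Normal form for core-wMSO(?,+): `N ::= φ ? N₁ : N₂ | M | 𝟬`. -/
inductive IsNF : CoreP A R → Prop
  | zero : IsNF .zero
  | ofM {M : CoreP A R} : IsM M → IsNF M
  | ite {N₁ N₂ : CoreP A R} (φ : MSO A) : IsNF N₁ → IsNF N₂ → IsNF (.ite φ N₁ N₂)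

/-- The finite sum `∑_{i=1}^k ∏_x Ψ_i` of products. -/
def sumProds (x : ℕ) (L : List (Step A R)) : CoreP A R :=
  (L.map (CoreP.prod x)).foldr CoreP.add CoreP.zero

/-! ### The full core-wMSO proof system -/

/-- `Σ_{X⃗}` for a sequence of second-order variables. -/
def bigSumSO (Xs : List ℕ) (Φ : Core A R) : Core A R := Xs.foldr Core.sumSO Φ

/-- The equational proof system for full core-wMSO: equational logic plus
axioms (C1)–(C16) together with the first-order analogues of (C11)–(C16);
MSO side conditions are read semantically. -/
inductive CoreDeriv : Set (MSO A) → Core A R → Core A R → Prop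
  | refl (Γ : Set (MSO A)) (Φ : Core A R) : CoreDeriv Γ Φ Φ
  | symm {Γ Φ₁ Φ₂} : CoreDeriv Γ Φ₁ Φ₂ → CoreDeriv Γ Φ₂ Φ₁
  | trans {Γ Φ₁ Φ₂ Φ₃} : CoreDeriv Γ Φ₁ Φ₂ → CoreDeriv Γ Φ₂ Φ₃ → CoreDeriv Γ Φ₁ Φ₃
  | congIte {Γ Φ₁ Φ₁' Φ₂ Φ₂'} (φ : MSO A) :
      CoreDeriv Γ Φ₁ Φ₁' → CoreDeriv Γ Φ₂ Φ₂' →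
      CoreDeriv Γ (.ite φ Φ₁ Φ₂) (.ite φ Φ₁' Φ₂')
  | congAdd {Γ Φ₁ Φ₁' Φ₂ Φ₂'} :
      CoreDeriv Γ Φ₁ Φ₁' → CoreDeriv Γ Φ₂ Φ₂' →
      CoreDeriv Γ (.add Φ₁ Φ₂) (.add Φ₁' Φ₂')
  | c1 (Γ : Set (MSO A)) (Φ : Core A R) : CoreDeriv Γ (Φ.add .zero) Φ
  | c2 (Γ : Set (MSO A)) (Φ₁ Φ₂ : Core A R) : CoreDeriv Γ (Φ₁.add Φ₂) (Φ₂.add Φ₁)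
  | c3 (Γ : Set (MSO A)) (Φ₁ Φ₂ Φ₃ : Core A R) :
      CoreDeriv Γ ((Φ₁.add Φ₂).add Φ₃) (Φ₁.add (Φ₂.add Φ₃))
  | c4 {Γ : Set (MSO A)} {Ψ₁ Ψ₂ : Step A R} (x : ℕ) :
      (∀ ψ ∈ Γ, ¬ ψ.FreeFO x) → StepDeriv Γ Ψ₁ Ψ₂ →
      CoreDeriv Γ (.prod x Ψ₁) (.prod x Ψ₂)
  | c5 (Γ : Set (MSO A)) (x y : ℕ) (Ψ : Step A R) :
      ¬ Ψ.OccFO y → CoreDeriv Γ (.prod x Ψ) (.prod y (Ψ.renFO x y))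
  | c6 {Γ Φ₁ Φ₂} (φ : MSO A) : CoreDeriv Γ Φ₁ Φ₂ → CoreDeriv (insert φ Γ) Φ₁ Φ₂
  | c7 (Γ : Set (MSO A)) (φ : MSO A) (Φ₁ Φ₂ : Core A R) :
      CoreDeriv Γ (.ite (.not φ) Φ₁ Φ₂) (.ite φ Φ₂ Φ₁)
  | c8 {Γ : Set (MSO A)} {φ : MSO A} (Φ₁ Φ₂ : Core A R) :
      Entails Γ φ → CoreDeriv Γ (.ite φ Φ₁ Φ₂) Φ₁
  | c9 {Γ : Set (MSO A)} {φ : MSO A} {Φ₁ Φ₂ Φ : Core A R} :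
      CoreDeriv (insert φ Γ) Φ₁ Φ → CoreDeriv (insert (.not φ) Γ) Φ₂ Φ →
      CoreDeriv Γ (.ite φ Φ₁ Φ₂) Φ
  | c10 (Γ : Set (MSO A)) (φ : MSO A) (Φ' Φ'' Φ : Core A R) :
      CoreDeriv Γ ((Core.ite φ Φ' Φ'').add Φ) (.ite φ (Φ'.add Φ) (Φ''.add Φ))
  | c11 {Γ : Set (MSO A)} {Φ₁ Φ₂ : Core A R} (X : ℕ) :
      (∀ ψ ∈ Γ, ¬ ψ.FreeSO X) → CoreDeriv Γ Φ₁ Φ₂ →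
      CoreDeriv Γ (.sumSO X Φ₁) (.sumSO X Φ₂)
  | c11fo {Γ : Set (MSO A)} {Φ₁ Φ₂ : Core A R} (x : ℕ) :
      (∀ ψ ∈ Γ, ¬ ψ.FreeFO x) → CoreDeriv Γ Φ₁ Φ₂ →
      CoreDeriv Γ (.sumFO x Φ₁) (.sumFO x Φ₂)
  | c12 (Γ : Set (MSO A)) (X Y : ℕ) (Φ : Core A R) :
      ¬ Φ.OccSO Y → CoreDeriv Γ (.sumSO X Φ) (.sumSO Y (Φ.renSO X Y))
  | c12fo (Γ : Set (MSO A)) (x y : ℕ) (Φ : Core A R) :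
      ¬ Φ.OccFO y → CoreDeriv Γ (.sumFO x Φ) (.sumFO y (Φ.renFO x y))
  | c13 (Γ : Set (MSO A)) (X Y : ℕ) (Φ : Core A R) :
      CoreDeriv Γ (.sumSO X (.sumSO Y Φ)) (.sumSO Y (.sumSO X Φ))
  | c13fo (Γ : Set (MSO A)) (x y : ℕ) (Φ : Core A R) :
      CoreDeriv Γ (.sumFO x (.sumFO y Φ)) (.sumFO y (.sumFO x Φ))
  | c14 (Γ : Set (MSO A)) (X : ℕ) (Φ₁ Φ₂ : Core A R) :
      CoreDeriv Γ (.sumSO X (Φ₁.add Φ₂)) ((Core.sumSO X Φ₁).add (.sumSO X Φ₂))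
  | c14fo (Γ : Set (MSO A)) (x : ℕ) (Φ₁ Φ₂ : Core A R) :
      CoreDeriv Γ (.sumFO x (Φ₁.add Φ₂)) ((Core.sumFO x Φ₁).add (.sumFO x Φ₂))
  | c15 (Γ : Set (MSO A)) (X : ℕ) (φ : MSO A) (Φ₁ Φ₂ : Core A R) :
      ¬ φ.FreeSO X →
      CoreDeriv Γ (.ite φ (.sumSO X Φ₁) (.sumSO X Φ₂)) (.sumSO X (.ite φ Φ₁ Φ₂))
  | c15fo (Γ : Set (MSO A)) (x : ℕ) (φ : MSO A) (Φ₁ Φ₂ : Core A R) :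
      ¬ φ.FreeFO x →
      CoreDeriv Γ (.ite φ (.sumFO x Φ₁) (.sumFO x Φ₂)) (.sumFO x (.ite φ Φ₁ Φ₂))
  | c16 (Γ : Set (MSO A)) (X : ℕ) (φ : MSO A) (Φ : Core A R) :
      (∀ m : WVal A, SatAll Γ m → ∃! I : Finset (Fin m.word.length), φ.Sat (m.updSO X I)) →
      ¬ Φ.OccSO X → CoreDeriv Γ Φ (.sumSO X (.ite φ Φ .zero))
  | c16fo (Γ : Set (MSO A)) (x : ℕ) (φ : MSO A) (Φ : Core A R) :
      (∀ m : WVal A, SatAll Γ m → ∃! i : Fin m.word.length, φ.Sat (m.updFO x i)) →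
      ¬ Φ.OccFO x → CoreDeriv Γ Φ (.sumFO x (.ite φ Φ .zero))

/-! ### Weighted automata -/

/-- An `R`-weighted automaton over `A` with state type `Q`
(transition relation `delta`, weight function `wgt`, initial states `start`,
final states `final`). -/
structure WA (A R Q : Type) where
  delta : Q → A → Q → Prop
  wgt : Q → A → Q → R
  start : Set Q
  final : Set Q

/-- A run of the automaton on `w`, described by its sequence of states, is
accepting if it starts in an initial state, ends in a final state, and each
step is a transition. -/
def WA.IsAccRun {Q : Type} (M : WA A R Q) (w : List A) (qs : Fin (w.length + 1) → Q) : Prop :=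
  qs 0 ∈ M.start ∧ qs (Fin.last w.length) ∈ M.final ∧
    ∀ i : Fin w.length, M.delta (qs i.castSucc) (w.get i) (qs i.succ)

/-- The weight of a run: the word of the weights of its transitions. -/
def WA.runWeight {Q : Type} (M : WA A R Q) (w : List A) (qs : Fin (w.length + 1) → Q) : List R :=
  List.ofFn fun i : Fin w.length => M.wgt (qs i.castSucc) (w.get i) (qs i.succ)

open Classical in
/-- The abstract semantics of a weighted automaton: the multiset of the
weights of its accepting runs on `w`. -/
noncomputable def WA.sem {Q : Type} [Fintype Q] [DecidableEq Q] (M : WA A R Q)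
    (w : List A) : Multiset (List R) :=
  ((Finset.univ.filter (M.IsAccRun w)).val).map (M.runWeight w)


/-! ### Auxiliary infrastructure for Statement 18 -/

section Aux18
variable {A R : Type}

/-- All second-order variables occurring in an MSO formula. -/
def soVarsM : MSO A → Finset ℕ
  | .top => ∅
  | .pred _ _ => ∅
  | .le _ _ => ∅
  | .mem _ Z => {Z}
  | .not φ => soVarsM φ
  | .and φ ψ => soVarsM φ ∪ soVarsM ψ
  | .allFO _ φ => soVarsM φ
  | .allSO Z φ => insert Z (soVarsM φ)

/-- All first-order variables occurring in an MSO formula. -/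
def foVarsM : MSO A → Finset ℕ
  | .top => ∅
  | .pred _ z => {z}
  | .le z w => {z, w}
  | .mem z _ => {z}
  | .not φ => foVarsM φ
  | .and φ ψ => foVarsM φ ∪ foVarsM ψ
  | .allFO z φ => insert z (foVarsM φ)
  | .allSO _ φ => foVarsM φ

def soVarsS : Step A R → Finset ℕ
  | .const _ => ∅
  | .ite φ a b => soVarsM φ ∪ (soVarsS a ∪ soVarsS b)

def foVarsS : Step A R → Finset ℕ
  | .const _ => ∅
  | .ite φ a b => foVarsM φ ∪ (foVarsS a ∪ foVarsS b)

lemma occSO_soVars {Z : ℕ} : ∀ {φ : MSO A}, φ.OccSO Z → Z ∈ soVarsM φ := by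
  intro φ
  induction φ <;> simp_all [MSO.OccSO, soVarsM] <;> tauto

lemma freeSO_soVars {Z : ℕ} : ∀ {φ : MSO A}, φ.FreeSO Z → Z ∈ soVarsM φ := by
  intro φ
  induction φ <;> simp_all [MSO.FreeSO, soVarsM] <;> tauto

lemma occFO_foVars {z : ℕ} : ∀ {φ : MSO A}, φ.OccFO z → z ∈ foVarsM φ := by
  intro φ
  induction φ <;> simp_all [MSO.OccFO, foVarsM] <;> tauto

lemma freeFO_foVars {z : ℕ} : ∀ {φ : MSO A}, φ.FreeFO z → z ∈ foVarsM φ := by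
  intro φ
  induction φ <;> simp_all [MSO.FreeFO, foVarsM] <;> tauto

lemma occSO_soVarsS {Z : ℕ} : ∀ {Ψ : Step A R}, Ψ.OccSO Z → Z ∈ soVarsS Ψ := by
  intro Ψ
  induction Ψ <;> simp_all [Step.OccSO, soVarsS]
  rintro (h | h | h)
  · exact Or.inl (occSO_soVars h)
  · tauto
  · tauto

lemma occFO_foVarsS {z : ℕ} : ∀ {Ψ : Step A R}, Ψ.OccFO z → z ∈ foVarsS Ψ := by
  intro Ψ
  induction Ψ <;> simp_all [Step.OccFO, foVarsS]
  rintro (h | h | h)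
  · exact Or.inl (occFO_foVars h)
  · tauto
  · tauto

lemma rn_eq {x y w z : ℕ} (h : rn x y w = z) : z = y ∨ (z ≠ x ∧ w = z) := by
  unfold rn at h
  split at h
  · exact Or.inl h.symm
  · subst h; tauto

lemma occSO_renSO {Z X Y : ℕ} : ∀ {φ : MSO A}, (φ.renSO X Y).OccSO Z → Z = Y ∨ φ.OccSO Z := by
  intro φ
  induction φ with
  | top => simp [MSO.renSO, MSO.OccSO]
  | pred => simp [MSO.renSO, MSO.OccSO]
  | le => simp [MSO.renSO, MSO.OccSO]
  | mem z W =>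
    simp only [MSO.renSO, MSO.OccSO]
    intro h; rcases rn_eq h with h | h <;> tauto
  | not φ ih => exact ih
  | and φ ψ ihφ ihψ =>
    simp only [MSO.renSO, MSO.OccSO]
    rintro (h | h)
    · rcases ihφ h with h | h <;> tauto
    · rcases ihψ h with h | h <;> tauto
  | allFO z φ ih => exact ih
  | allSO W φ ih =>
    simp only [MSO.renSO, MSO.OccSO]
    rintro (h | h)
    · rcases rn_eq h with h | h <;> tauto
    · rcases ih h with h | h <;> tauto

lemma occSO_renSO_S {Z X Y : ℕ} : ∀ {Ψ : Step A R},
    (Ψ.renSO X Y).OccSO Z → Z = Y ∨ Ψ.OccSO Z := by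
  intro Ψ
  induction Ψ with
  | const => simp [Step.renSO, Step.OccSO]
  | ite φ a b iha ihb =>
    simp only [Step.renSO, Step.OccSO]
    rintro (h | h | h)
    · rcases occSO_renSO h with h | h <;> tauto
    · rcases iha h with h | h <;> tauto
    · rcases ihb h with h | h <;> tauto

lemma freeFO_renSO {z X Y : ℕ} : ∀ {φ : MSO A}, (φ.renSO X Y).FreeFO z → φ.FreeFO z := by
  intro φ
  induction φ <;> simp_all [MSO.FreeFO, MSO.renSO] <;> tauto

lemma occFO_renSO {z X Y : ℕ} : ∀ {φ : MSO A}, (φ.renSO X Y).OccFO z → φ.OccFO z := by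
  intro φ
  induction φ <;> simp_all [MSO.OccFO, MSO.renSO] <;> tauto

lemma occFO_renSO_S {z X Y : ℕ} : ∀ {Ψ : Step A R},
    (Ψ.renSO X Y).OccFO z → Ψ.OccFO z := by
  intro Ψ
  induction Ψ with
  | const => simp [Step.renSO, Step.OccFO]
  | ite φ a b iha ihb =>
    simp only [Step.renSO, Step.OccFO]
    rintro (h | h | h)
    · exact Or.inl (occFO_renSO h)
    · exact Or.inr (Or.inl (iha h))
    · exact Or.inr (Or.inr (ihb h))

lemma occFO_renFO {z x y : ℕ} : ∀ {φ : MSO A},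
    (φ.renFO x y).OccFO z → z = y ∨ (z ≠ x ∧ φ.OccFO z) := by
  intro φ
  induction φ with
  | top => simp [MSO.renFO, MSO.OccFO]
  | pred a w =>
    simp only [MSO.renFO, MSO.OccFO]
    intro h; rcases rn_eq h with h | h <;> tauto
  | le w v =>
    simp only [MSO.renFO, MSO.OccFO]
    rintro (h | h) <;> rcases rn_eq h with h | h <;> tauto
  | mem w W =>
    simp only [MSO.renFO, MSO.OccFO]
    intro h; rcases rn_eq h with h | h <;> tauto
  | not φ ih => exact ih
  | and φ ψ ihφ ihψ =>
    simp only [MSO.renFO, MSO.OccFO]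
    rintro (h | h)
    · rcases ihφ h with h | h <;> tauto
    · rcases ihψ h with h | h <;> tauto
  | allFO w φ ih =>
    simp only [MSO.renFO, MSO.OccFO]
    rintro (h | h)
    · rcases rn_eq h with h | h <;> tauto
    · rcases ih h with h | h <;> tauto
  | allSO W φ ih => exact ih

lemma occFO_renFO_S {z x y : ℕ} : ∀ {Ψ : Step A R},
    (Ψ.renFO x y).OccFO z → z = y ∨ (z ≠ x ∧ Ψ.OccFO z) := by
  intro Ψ
  induction Ψ with
  | const => simp [Step.renFO, Step.OccFO]
  | ite φ a b iha ihb =>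
    simp only [Step.renFO, Step.OccFO]
    rintro (h | h | h)
    · rcases occFO_renFO h with h | h <;> tauto
    · rcases iha h with h | h <;> tauto
    · rcases ihb h with h | h <;> tauto

lemma rn_rt {x y z : ℕ} (h : z ≠ y) : rn y x (rn x y z) = z := by
  unfold rn; split <;> simp_all [rn]

lemma renFO_rt {x y : ℕ} : ∀ {φ : MSO A}, ¬ φ.OccFO y → (φ.renFO x y).renFO y x = φ := by
  intro φ
  induction φ <;> simp_all [MSO.OccFO, MSO.renFO] <;>
    intros <;>
    first
      | (constructor <;> first | (apply rn_rt; tauto) | tauto)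
      | (apply rn_rt; tauto)
      | tauto

lemma renFO_rt_S {x y : ℕ} : ∀ {Ψ : Step A R},
    ¬ Ψ.OccFO y → (Ψ.renFO x y).renFO y x = Ψ := by
  intro Ψ
  induction Ψ with
  | const => simp [Step.renFO]
  | ite φ a b iha ihb =>
    simp only [Step.OccFO, Step.renFO]
    intro h
    push_neg at h
    rw [renFO_rt h.1, iha h.2.1, ihb h.2.2]

lemma renFO_fix {x y : ℕ} : ∀ {φ : MSO A}, ¬ φ.OccFO x → φ.renFO x y = φ := by
  intro φ
  induction φ <;> simp_all [MSO.OccFO, MSO.renFO, rn] <;> tauto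

end Aux18


section Aux18b
variable {A R : Type}

/-- The formula `Y = ∅` (with bound first-order variable `v`). -/
def empF (v Y : ℕ) : MSO A := .allFO v (.not (.mem v Y))

/-- The formula `Y ⊆ {min}` (with bound first-order variables `v₁ ≠ v₂`). -/
def selF (v₁ v₂ Y : ℕ) : MSO A :=
  .allFO v₁ (.not (.and (.mem v₁ Y) (.not (.allFO v₂ (.le v₁ v₂)))))

lemma sat_empF {m : WVal A} {v Y : ℕ} : (empF v Y : MSO A).Sat m ↔ m.so Y = ∅ := by
  simp [empF, MSO.Sat, WVal.updFO, Finset.eq_empty_iff_forall_notMem]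
  exact Iff.rfl

lemma sat_selF {m : WVal A} {v₁ v₂ Y : ℕ} (h : v₁ ≠ v₂) :
    (selF v₁ v₂ Y : MSO A).Sat m ↔ ∀ i ∈ m.so Y, ∀ j : Fin m.word.length, (i : ℕ) ≤ (j : ℕ) := by
  simp only [selF, MSO.Sat, WVal.updFO, Function.update_self, Function.update_apply,
    if_neg h, if_neg (Ne.symm h)]
  constructor
  · intro h' i hi j
    have := h' i
    rw [not_and_or] at this
    rcases this with h'' | h''
    · exact absurd hi h''
    · rw [not_not] at h''; exact h'' j
  · intro h' i
    rw [not_and_or]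
    by_cases hi : i ∈ m.so Y
    · exact Or.inr (not_not_intro (h' i hi))
    · exact Or.inl hi

lemma occFO_empF {z v Y : ℕ} : (empF v Y : MSO A).OccFO z ↔ z = v := by
  simp [empF, MSO.OccFO, eq_comm]

lemma freeFO_empF {z v Y : ℕ} : ¬ (empF v Y : MSO A).FreeFO z := by
  simp [empF, MSO.FreeFO]

lemma freeSO_empF {Z v Y : ℕ} : (empF v Y : MSO A).FreeSO Z ↔ Y = Z := by
  simp [empF, MSO.FreeSO]

lemma occSO_empF {Z v Y : ℕ} : (empF v Y : MSO A).OccSO Z ↔ Y = Z := by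
  simp [empF, MSO.OccSO]

lemma freeFO_selF {z v₁ v₂ Y : ℕ} : ¬ (selF v₁ v₂ Y : MSO A).FreeFO z := by
  simp [selF, MSO.FreeFO]
  tauto

lemma freeSO_selF {Z v₁ v₂ Y : ℕ} : (selF v₁ v₂ Y : MSO A).FreeSO Z ↔ Y = Z := by
  simp [selF, MSO.FreeSO]

lemma occSO_selF {Z v₁ v₂ Y : ℕ} : (selF v₁ v₂ Y : MSO A).OccSO Z ↔ Y = Z := by
  simp [selF, MSO.OccSO]

lemma uniq_empF (v Y : ℕ) (m : WVal A) :
    ∃! I : Finset (Fin m.word.length), (empF v Y : MSO A).Sat (m.updSO Y I) := by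
  have key : ∀ I : Finset (Fin m.word.length),
      (empF v Y : MSO A).Sat (m.updSO Y I) ↔ I = ∅ := by
    intro I
    rw [sat_empF]
    simp [WVal.updSO]
    exact Iff.rfl
  exact ⟨∅, (key ∅).2 rfl, fun I hI => (key I).1 hI⟩

lemma uniq_selq {v v₁ v₂ Y : ℕ} (h : v₁ ≠ v₂) (m : WVal A) :
    ∃! I : Finset (Fin m.word.length),
      ((selF v₁ v₂ Y).and (.not (empF v Y)) : MSO A).Sat (m.updSO Y I) := by
  have pos : 0 < m.word.length := List.length_pos_iff.2 m.nonempty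
  set z0 : Fin m.word.length := ⟨0, pos⟩ with hz0
  have key : ∀ I : Finset (Fin m.word.length),
      ((selF v₁ v₂ Y).and (.not (empF v Y)) : MSO A).Sat (m.updSO Y I) ↔ I = {z0} := by
    intro I
    show ((selF v₁ v₂ Y : MSO A).Sat (m.updSO Y I) ∧
      ¬ (empF v Y : MSO A).Sat (m.updSO Y I)) ↔ _
    rw [sat_selF h, sat_empF]
    have hso : (m.updSO Y I).so Y = I := by simp [WVal.updSO]
    rw [show ((m.updSO Y I).so Y) = I from hso]
    constructor
    · rintro ⟨hmin, hne⟩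
      apply Finset.ext
      intro k
      simp only [Finset.mem_singleton]
      constructor
      · intro hk
        have := hmin k hk z0
        exact Fin.ext (Nat.le_zero.1 this)
      · intro hk
        obtain ⟨w, hw⟩ := Finset.nonempty_iff_ne_empty.2 hne
        have : w = z0 := Fin.ext (Nat.le_zero.1 (hmin w hw z0))
        rw [hk, ← this]; exact hw
    · rintro rfl
      refine ⟨?_, Finset.singleton_ne_empty _⟩
      intro i hi j
      replace hi : i = z0 := Finset.mem_singleton.1 hi
      subst hi
      exact Nat.zero_le _
  exact ⟨{z0}, (key _).2 rfl, fun I hI => (key I).1 hI⟩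

/-! ### Entailment helpers -/

lemma entails_mem {Γ : Set (MSO A)} {φ : MSO A} (h : φ ∈ Γ) : Entails Γ φ :=
  fun _ hm => hm φ h

lemma satAll_insert {Γ : Set (MSO A)} {φ : MSO A} {m : WVal A} :
    SatAll (insert φ Γ) m ↔ φ.Sat m ∧ SatAll Γ m := by
  simp [SatAll, Set.mem_insert_iff, forall_eq_or_imp]

lemma sat_or {φ ψ : MSO A} {m : WVal A} : (φ.or ψ).Sat m ↔ φ.Sat m ∨ ψ.Sat m := by
  show ¬ (¬ φ.Sat m ∧ ¬ ψ.Sat m) ↔ _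
  tauto

/-! ### Derived rules of the core-wMSO proof system -/

lemma iteFalseD {Γ : Set (MSO A)} {φ : MSO A} (Φ₁ Φ₂ : Core A R)
    (h : Entails Γ (.not φ)) : CoreDeriv Γ (.ite φ Φ₁ Φ₂) Φ₂ :=
  .trans (.symm (.c7 Γ φ Φ₂ Φ₁)) (.c8 _ _ h)

lemma stepIteFalseD {Γ : Set (MSO A)} {φ : MSO A} (Ψa Ψb : Step A R)
    (h : Entails Γ (.not φ)) : StepDeriv Γ (.ite φ Ψa Ψb) Ψb :=
  .trans (.symm (.s2 Γ φ Ψb Ψa)) (.s3 _ _ h)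

lemma andIteD (Γ : Set (MSO A)) (φ ψ : MSO A) (Φ : Core A R) :
    CoreDeriv Γ (.ite φ (.ite ψ Φ .zero) .zero) (.ite (φ.and ψ) Φ .zero) := by
  apply CoreDeriv.c9
  · apply CoreDeriv.c9
    · refine .symm (.c8 _ _ ?_)
      intro m hm
      rw [satAll_insert] at hm
      have hm' := hm.2
      rw [satAll_insert] at hm'
      exact ⟨hm'.1, hm.1⟩
    · refine .symm (iteFalseD _ _ ?_)
      intro m hm
      rw [satAll_insert] at hm
      intro hc
      exact hm.1 hc.2
  · refine .symm (iteFalseD _ _ ?_)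
    intro m hm
    rw [satAll_insert] at hm
    intro hc
    exact hm.1 hc.1

end Aux18b


section Aux18c
variable {A R : Type}

/-- `φ ? ∏_x Ψ : 𝟬`. -/
def NC (x : ℕ) (φ : MSO A) (Ψ : Step A R) : Core A R := .ite φ (.prod x Ψ) .zero

/-- `Z` is not free in any formula of `Γ`. -/
def GF (Γ : Set (MSO A)) (Z : ℕ) : Prop := ∀ ψ ∈ Γ, ¬ ψ.FreeSO Z

lemma occSO_NC {x Z : ℕ} {φ : MSO A} {Ψ : Step A R} :
    (NC x φ Ψ : Core A R).OccSO Z ↔ φ.OccSO Z ∨ Ψ.OccSO Z := by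
  simp [NC, Core.OccSO]

lemma renSO_NC {x X Y : ℕ} {φ : MSO A} {Ψ : Step A R} :
    (NC x φ Ψ : Core A R).renSO X Y = NC x (φ.renSO X Y) (Ψ.renSO X Y) := rfl

lemma bigSumSO_append (L₁ L₂ : List ℕ) (Φ : Core A R) :
    bigSumSO (L₁ ++ L₂) Φ = bigSumSO L₁ (bigSumSO L₂ Φ) :=
  List.foldr_append

lemma occSO_bigSum {Z : ℕ} : ∀ (L : List ℕ) (Φ : Core A R),
    (bigSumSO L Φ).OccSO Z ↔ Z ∈ L ∨ Φ.OccSO Z := by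
  intro L
  induction L with
  | nil => simp [bigSumSO]
  | cons W L ih =>
    intro Φ
    show (W = Z ∨ (bigSumSO L Φ).OccSO Z) ↔ _
    rw [ih]
    simp [List.mem_cons, or_assoc, eq_comm]

lemma renSO_bigSum {X Y : ℕ} : ∀ (L : List ℕ) (Φ : Core A R),
    (bigSumSO L Φ).renSO X Y = bigSumSO (L.map (rn X Y)) (Φ.renSO X Y) := by
  intro L
  induction L with
  | nil => intro Φ; rfl
  | cons W L ih =>
    intro Φ
    show Core.sumSO (rn X Y W) ((bigSumSO L Φ).renSO X Y) = _
    rw [ih]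
    rfl

lemma c11big {Γ : Set (MSO A)} {Φ Φ' : Core A R} :
    ∀ (L : List ℕ), (∀ Z ∈ L, GF Γ Z) → CoreDeriv Γ Φ Φ' →
    CoreDeriv Γ (bigSumSO L Φ) (bigSumSO L Φ') := by
  intro L
  induction L with
  | nil => intro _ h; exact h
  | cons W L ih =>
    intro hL h
    exact .c11 W (hL W (by simp)) (ih (fun Z hZ => hL Z (by simp [hZ])) h)

lemma zeroSumD {Γ : Set (MSO A)} {W : ℕ} (hW : GF Γ W) :
    CoreDeriv Γ (.zero : Core A R) (.sumSO W .zero) := by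
  have h1 : CoreDeriv Γ (.zero : Core A R) (.sumSO W (.ite (empF 0 W) .zero .zero)) :=
    .c16 Γ W (empF 0 W) .zero (fun m _ => uniq_empF 0 W m) (by simp [Core.OccSO])
  refine .trans h1 (.c11 W hW ?_)
  exact .c9 (.refl _ _) (.refl _ _)

lemma zeroSumBig {Γ : Set (MSO A)} :
    ∀ (L : List ℕ), (∀ Z ∈ L, GF Γ Z) →
    CoreDeriv Γ (.zero : Core A R) (bigSumSO L .zero) := by
  intro L
  induction L with
  | nil => intro _; exact .refl _ _
  | cons W L ih =>
    intro hL
    refine .trans (zeroSumD (hL W (by simp))) (.c11 W (hL W (by simp)) ?_)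
    exact ih (fun Z hZ => hL Z (by simp [hZ]))

lemma c15big {Γ : Set (MSO A)} {φ : MSO A} {Φ₁ Φ₂ : Core A R} :
    ∀ (L : List ℕ), (∀ Z ∈ L, GF Γ Z ∧ ¬ φ.FreeSO Z) →
    CoreDeriv Γ (.ite φ (bigSumSO L Φ₁) (bigSumSO L Φ₂)) (bigSumSO L (.ite φ Φ₁ Φ₂)) := by
  intro L
  induction L with
  | nil => intro _; exact .refl _ _
  | cons W L ih =>
    intro hL
    refine .trans (.c15 Γ W φ _ _ (hL W (by simp)).2) ?_
    exact .c11 W (hL W (by simp)).1 (ih (fun Z hZ => hL Z (by simp [hZ])))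

lemma moveFront {Γ : Set (MSO A)} {Y : ℕ} {Φ : Core A R} :
    ∀ (as : List ℕ) (bs : List ℕ), (∀ Z ∈ as, GF Γ Z) →
    CoreDeriv Γ (bigSumSO (as ++ Y :: bs) Φ) (.sumSO Y (bigSumSO (as ++ bs) Φ)) := by
  intro as
  induction as with
  | nil => intro bs _; exact .refl _ _
  | cons a as ih =>
    intro bs ha
    have h1 : CoreDeriv Γ (bigSumSO (a :: (as ++ Y :: bs)) Φ)
        (.sumSO a (.sumSO Y (bigSumSO (as ++ bs) Φ))) :=
      .c11 a (ha a (by simp)) (ih bs (fun Z hZ => ha Z (by simp [hZ])))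
    exact .trans h1 (.c13 Γ a Y _)

lemma commuteBlocks {Γ : Set (MSO A)} {Φ : Core A R} :
    ∀ (ys xs : List ℕ), (∀ Z ∈ xs, GF Γ Z) → (∀ Z ∈ ys, GF Γ Z) →
    CoreDeriv Γ (bigSumSO (xs ++ ys) Φ) (bigSumSO (ys ++ xs) Φ) := by
  intro ys
  induction ys with
  | nil => intro xs _ _; rw [List.append_nil]; exact .refl _ _
  | cons y ys ih =>
    intro xs hxs hys
    refine .trans (moveFront xs ys hxs) ?_
    refine .c11 y (hys y (by simp)) ?_
    exact ih xs hxs (fun Z hZ => hys Z (by simp [hZ]))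

lemma padList {Γ : Set (MSO A)} {x vp : ℕ} :
    ∀ (L : List ℕ) (φ : MSO A) (Ψ : Step A R), L.Nodup →
    (∀ Z ∈ L, GF Γ Z ∧ ¬ φ.OccSO Z ∧ ¬ Ψ.OccSO Z) →
    ∃ φ'' : MSO A, CoreDeriv Γ (NC x φ Ψ) (bigSumSO L (NC x φ'' Ψ)) ∧
      (∀ Z, φ''.OccSO Z → φ.OccSO Z ∨ Z ∈ L) ∧
      (∀ z, φ''.FreeFO z → φ.FreeFO z) := by
  intro L
  induction L with
  | nil =>
    intro φ Ψ _ _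
    exact ⟨φ, .refl _ _, fun Z h => Or.inl h, fun z h => h⟩
  | cons Y L ih =>
    intro φ Ψ hnd hL
    have hYfr := (hL Y (by simp)).1
    have hYφ := (hL Y (by simp)).2.1
    have hYΨ := (hL Y (by simp)).2.2
    -- pad with Y first
    have d1 : CoreDeriv Γ (NC x φ Ψ) (.sumSO Y (.ite (empF vp Y) (NC x φ Ψ) .zero)) :=
      .c16 Γ Y (empF vp Y) (NC x φ Ψ) (fun m _ => uniq_empF vp Y m)
        (by rw [occSO_NC]; tauto)
    have d2 : CoreDeriv Γ (.ite (empF vp Y) (NC x φ Ψ) .zero)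
        (NC x ((empF vp Y).and φ) Ψ) := andIteD Γ _ _ _
    obtain ⟨φ'', d3, hocc, hfo⟩ := ih ((empF vp Y).and φ) Ψ (List.nodup_cons.1 hnd).2
      (by
        intro Z hZ
        refine ⟨(hL Z (by simp [hZ])).1, ?_, (hL Z (by simp [hZ])).2.2⟩
        intro hc
        rcases hc with hc | hc
        · rw [occSO_empF] at hc
          exact (List.nodup_cons.1 hnd).1 (hc ▸ hZ)
        · exact (hL Z (by simp [hZ])).2.1 hc)
    refine ⟨φ'', .trans d1 (.c11 Y hYfr (.trans d2 d3)), ?_, ?_⟩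
    · intro Z h
      rcases hocc Z h with h | h
      · rcases h with h | h
        · rw [occSO_empF] at h; simp [h]
        · exact Or.inl h
      · simp [h]
    · intro z h
      have := hfo z h
      rcases this with h | h
      · exact absurd h freeFO_empF
      · exact h

lemma renameBig {Γ : Set (MSO A)} {x : ℕ} :
    ∀ (L' L : List ℕ) (φ : MSO A) (Ψ : Step A R), L.length = L'.length → L'.Nodup →
    (∀ Z ∈ L', GF Γ Z ∧ Z ∉ L ∧ ¬ φ.OccSO Z ∧ ¬ Ψ.OccSO Z) →
    ∃ (φ' : MSO A) (Ψ' : Step A R),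
      CoreDeriv Γ (bigSumSO L (NC x φ Ψ)) (bigSumSO L' (NC x φ' Ψ')) ∧
      (∀ Z, φ'.OccSO Z → φ.OccSO Z ∨ Z ∈ L') ∧
      (∀ Z, Ψ'.OccSO Z → Ψ.OccSO Z ∨ Z ∈ L') ∧
      (∀ z, φ'.FreeFO z → φ.FreeFO z) ∧
      (∀ z, Ψ'.OccFO z → Ψ.OccFO z) := by
  intro L'
  induction L' with
  | nil =>
    intro L φ Ψ hlen _ _
    rw [show ([] : List ℕ).length = 0 from rfl, List.length_eq_zero_iff] at hlen
    subst hlen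
    exact ⟨φ, Ψ, .refl _ _, fun Z h => Or.inl h, fun Z h => Or.inl h,
      fun z h => h, fun z h => h⟩
  | cons X' T' ih =>
    intro L φ Ψ hlen hnd hL'
    cases L with
    | nil => simp at hlen
    | cons X T =>
      have hX' := hL' X' (by simp)
      -- rename the outermost binder
      have d1 : CoreDeriv Γ (Core.sumSO X (bigSumSO T (NC x φ Ψ)))
          (.sumSO X' ((bigSumSO T (NC x φ Ψ)).renSO X X')) := by
        refine .c12 Γ X X' _ ?_
        rw [occSO_bigSum]
        push_neg
        refine ⟨fun hc => hX'.2.1 (by simp [hc]), ?_⟩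
        rw [occSO_NC]
        tauto
      rw [renSO_bigSum, renSO_NC] at d1
      obtain ⟨φ', Ψ', d2, hoccφ, hoccΨ, hfoφ, hfoΨ⟩ :=
        ih (T.map (rn X X')) (φ.renSO X X') (Ψ.renSO X X')
          (by simp; exact Nat.succ_injective hlen)
          (List.nodup_cons.1 hnd).2
          (by
            intro Z hZ
            have hZ' := hL' Z (by simp [hZ])
            refine ⟨hZ'.1, ?_, ?_, ?_⟩
            · intro hc
              rw [List.mem_map] at hc
              obtain ⟨w, hw, hwe⟩ := hc
              rcases rn_eq hwe with h | h
              · exact (List.nodup_cons.1 hnd).1 (h ▸ hZ)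
              · exact hZ'.2.1 (by simp [h.2 ▸ hw])
            · intro hc
              rcases occSO_renSO hc with h | h
              · exact (List.nodup_cons.1 hnd).1 (h ▸ hZ)
              · exact hZ'.2.2.1 h
            · intro hc
              rcases occSO_renSO_S hc with h | h
              · exact (List.nodup_cons.1 hnd).1 (h ▸ hZ)
              · exact hZ'.2.2.2 h)
      refine ⟨φ', Ψ', .trans d1 (.c11 X' hX'.1 d2), ?_, ?_, ?_, ?_⟩
      · intro Z h
        rcases hoccφ Z h with h | h
        · rcases occSO_renSO h with h | h
          · simp [h]
          · exact Or.inl h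
        · simp [h]
      · intro Z h
        rcases hoccΨ Z h with h | h
        · rcases occSO_renSO_S h with h | h
          · simp [h]
          · exact Or.inl h
        · simp [h]
      · intro z h
        exact freeFO_renSO (hfoφ z h)
      · intro z h
        exact occFO_renSO_S (hfoΨ z h)

end Aux18c


section Aux18d
variable {A R : Type}

lemma exists_bound (Γ : Set (MSO A)) (hfin : Γ.Finite) (s : Finset ℕ) :
    ∃ B : ℕ, ∀ n, B ≤ n → n ∉ s ∧ ∀ ψ ∈ Γ, ¬ ψ.FreeSO n ∧ ¬ ψ.FreeFO n := by
  classical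
  set big : Finset ℕ := s ∪ hfin.toFinset.sup (fun ψ => soVarsM ψ ∪ foVarsM ψ) with hbig
  refine ⟨big.sup id + 1, ?_⟩
  intro n hn
  have hnot : n ∉ big := by
    intro hc
    have := Finset.le_sup (f := id) hc
    simp only [id] at this
    omega
  constructor
  · intro hc; exact hnot (Finset.mem_union_left _ hc)
  · intro ψ hψ
    have hsub : soVarsM ψ ∪ foVarsM ψ ⊆ big := by
      refine Finset.Subset.trans ?_ (Finset.subset_union_right)
      exact Finset.le_sup (f := fun ψ => soVarsM ψ ∪ foVarsM ψ) (hfin.mem_toFinset.mpr hψ)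
    constructor
    · intro hc
      exact hnot (hsub (Finset.mem_union_left _ (freeSO_soVars hc)))
    · intro hc
      exact hnot (hsub (Finset.mem_union_right _ (freeFO_foVars hc)))

/-- Combining two sums with a fresh selector variable `Z₀`. -/
lemma stageD {Γ : Set (MSO A)} {Z₀ v₁ v₂ : ℕ} (h12 : v₁ ≠ v₂) (hfr : GF Γ Z₀)
    {Φ₁ Φ₂ : Core A R} (h1 : ¬ Φ₁.OccSO Z₀) (h2 : ¬ Φ₂.OccSO Z₀) :
    CoreDeriv Γ (Φ₁.add Φ₂)
      (.sumSO Z₀ (.ite (selF v₁ v₂ Z₀) (.ite (empF v₁ Z₀) Φ₁ Φ₂) .zero)) := by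
  set e : MSO A := empF v₁ Z₀ with he
  set sel : MSO A := selF v₁ v₂ Z₀ with hsel
  set q : MSO A := sel.and (.not e) with hq
  have d1 : CoreDeriv Γ Φ₁ (.sumSO Z₀ (.ite e Φ₁ .zero)) :=
    .c16 Γ Z₀ e Φ₁ (fun m _ => uniq_empF v₁ Z₀ m) h1
  have d2 : CoreDeriv Γ Φ₂ (.sumSO Z₀ (.ite q Φ₂ .zero)) :=
    .c16 Γ Z₀ q Φ₂ (fun m _ => uniq_selq h12 m) h2
  have d4 : CoreDeriv Γ ((Core.sumSO Z₀ (.ite e Φ₁ .zero)).add (.sumSO Z₀ (.ite q Φ₂ .zero)))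
      (.sumSO Z₀ ((Core.ite e Φ₁ .zero).add (.ite q Φ₂ .zero))) :=
    .symm (.c14 Γ Z₀ _ _)
  have inner : CoreDeriv Γ ((Core.ite e Φ₁ .zero).add (.ite q Φ₂ .zero))
      (.ite sel (.ite e Φ₁ Φ₂) .zero) := by
    refine .trans (.c10 Γ e Φ₁ .zero _) ?_
    apply CoreDeriv.c9
    · -- context: insert e Γ
      have t1 : CoreDeriv (insert e Γ) (Core.ite q Φ₂ .zero) .zero := by
        refine iteFalseD _ _ ?_
        intro m hm
        rw [satAll_insert] at hm
        exact fun hc : sel.Sat m ∧ ¬ e.Sat m => hc.2 hm.1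
      have t2 : CoreDeriv (insert e Γ) (Φ₁.add (Core.ite q Φ₂ .zero)) Φ₁ :=
        .trans (.congAdd (.refl _ _) t1) (.c1 _ _)
      have t3 : CoreDeriv (insert e Γ) (Core.ite sel (.ite e Φ₁ Φ₂) .zero) Φ₁ := by
        refine .trans (.c8 _ _ ?_) (.c8 _ _ ?_)
        · intro m hm
          rw [satAll_insert] at hm
          rw [hsel, sat_selF h12]
          have : m.so Z₀ = ∅ := by rw [← sat_empF]; exact hm.1
          rw [this]
          simp
        · intro m hm
          rw [satAll_insert] at hm
          exact hm.1
      exact .trans t2 (.symm t3)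
    · -- context: insert (.not e) Γ
      have f1 : CoreDeriv (insert (MSO.not e) Γ) ((Core.zero).add (.ite q Φ₂ .zero))
          (.ite q Φ₂ .zero) := .trans (.c2 _ _ _) (.c1 _ _)
      refine .trans f1 ?_
      apply CoreDeriv.c9
      · -- context: insert q (insert (.not e) Γ)
        refine .symm (.trans (.c8 _ _ ?_) (iteFalseD _ _ ?_))
        · intro m hm
          rw [satAll_insert] at hm
          exact (hm.1 : sel.Sat m ∧ ¬ e.Sat m).1
        · intro m hm
          rw [satAll_insert, satAll_insert] at hm
          exact hm.2.1
      · -- context: insert (.not q) (insert (.not e) Γ)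
        refine .symm (iteFalseD _ _ ?_)
        intro m hm
        rw [satAll_insert, satAll_insert] at hm
        intro hc
        exact (hm.1 : ¬ (sel.Sat m ∧ ¬ e.Sat m)) ⟨hc, hm.2.1⟩
  exact .trans (.congAdd d1 d2) (.trans d4 (.c11 Z₀ hfr (.trans (.refl _ _) inner)))

/-- Merging the two branches of a conditional into a single `φ ? ∏ : 𝟬`. -/
lemma mergeN {Γ : Set (MSO A)} {x x' v₁ Z₀ : ℕ} {β₁ β₂ : MSO A} {Ψ₁' Ψ₂' : Step A R}
    (hΓx' : ∀ ψ ∈ Γ, ¬ ψ.FreeFO x')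
    (hβ₁ : ¬ β₁.FreeFO x') (hβ₂ : ¬ β₂.FreeFO x')
    (hΨ₁ : ¬ Ψ₁'.OccFO x') (hΨ₂ : ¬ Ψ₂'.OccFO x')
    (hxx' : x ≠ x') (hxv : x ≠ v₁) (hx'v : x' ≠ v₁) :
    CoreDeriv Γ (.ite (empF v₁ Z₀) (NC x β₁ Ψ₁') (NC x β₂ Ψ₂'))
      (NC x (((empF v₁ Z₀).and β₁).or ((MSO.not (empF v₁ Z₀)).and β₂))
        (.ite (empF v₁ Z₀) Ψ₁' Ψ₂')) := by
  set e : MSO A := empF v₁ Z₀ with he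
  set φ₄ : MSO A := (e.and β₁).or ((MSO.not e).and β₂) with hφ₄
  set Ψ₃ : Step A R := .ite e Ψ₁' Ψ₂' with hΨ₃
  have hgood : ∀ (Γ' : Set (MSO A)), (∀ ψ ∈ Γ', ¬ ψ.FreeFO x') → Entails Γ' e →
      CoreDeriv Γ' (.prod x Ψ₁') (.prod x Ψ₃) := by
    intro Γ' hΓ' hee
    have p1 : CoreDeriv Γ' (.prod x Ψ₁') (.prod x' (Ψ₁'.renFO x x')) :=
      .c5 Γ' x x' Ψ₁' hΨ₁
    have p2 : StepDeriv Γ' (Ψ₁'.renFO x x')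
        (.ite e (Ψ₁'.renFO x x') (Ψ₂'.renFO x x')) := .symm (.s3 _ _ hee)
    have p3 : CoreDeriv Γ' (.prod x' (Ψ₁'.renFO x x'))
        (.prod x' (.ite e (Ψ₁'.renFO x x') (Ψ₂'.renFO x x'))) := .c4 x' hΓ' p2
    have p4 : CoreDeriv Γ' (.prod x' (Step.ite e (Ψ₁'.renFO x x') (Ψ₂'.renFO x x')))
        (.prod x ((Step.ite e (Ψ₁'.renFO x x') (Ψ₂'.renFO x x')).renFO x' x)) := by
      refine .c5 Γ' x' x _ ?_
      intro hc
      rcases hc with hc | hc | hc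
      · rw [occFO_empF] at hc; exact hxv hc
      · rcases occFO_renFO_S hc with h | h
        · exact hxx' h
        · exact h.1 rfl
      · rcases occFO_renFO_S hc with h | h
        · exact hxx' h
        · exact h.1 rfl
    have hrw : (Step.ite e (Ψ₁'.renFO x x') (Ψ₂'.renFO x x')).renFO x' x = Ψ₃ := by
      show Step.ite (e.renFO x' x) ((Ψ₁'.renFO x x').renFO x' x)
        ((Ψ₂'.renFO x x').renFO x' x) = _
      rw [renFO_fix (by rw [occFO_empF]; exact hx'v), renFO_rt_S hΨ₁, renFO_rt_S hΨ₂]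
    rw [hrw] at p4
    exact .trans p1 (.trans p3 p4)
  apply CoreDeriv.c9
  · -- context insert e Γ : NC x β₁ Ψ₁' ≈ NC x φ₄ Ψ₃
    apply CoreDeriv.c9
    · -- insert β₁ (insert e Γ)
      have hctx : ∀ ψ ∈ insert β₁ (insert e Γ), ¬ ψ.FreeFO x' := by
        intro ψ hψ
        rcases hψ with rfl | hψ
        · exact hβ₁
        · rcases hψ with rfl | hψ
          · exact freeFO_empF
          · exact hΓx' ψ hψ
      have hee : Entails (insert β₁ (insert e Γ)) e :=
        entails_mem (Set.mem_insert_of_mem _ (Set.mem_insert _ _))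
      have p5 : CoreDeriv (insert β₁ (insert e Γ)) (.ite φ₄ (.prod x Ψ₃) .zero)
          (.prod x Ψ₃) := by
        refine .c8 _ _ ?_
        intro m hm
        rw [satAll_insert, satAll_insert] at hm
        rw [hφ₄, sat_or]
        exact Or.inl ⟨hm.2.1, hm.1⟩
      exact .trans (hgood _ hctx hee) (.symm p5)
    · -- insert (.not β₁) (insert e Γ)
      refine .symm (iteFalseD _ _ ?_)
      intro m hm
      rw [satAll_insert, satAll_insert] at hm
      intro hc
      rw [hφ₄, sat_or] at hc
      replace hc : (e.Sat m ∧ β₁.Sat m) ∨ (¬ e.Sat m ∧ β₂.Sat m) := hc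
      rcases hc with ⟨_, hc⟩ | ⟨hc, _⟩
      · exact hm.1 hc
      · exact hc hm.2.1
  · -- context insert (.not e) Γ : NC x β₂ Ψ₂' ≈ NC x φ₄ Ψ₃
    apply CoreDeriv.c9
    · -- insert β₂ (insert (.not e) Γ)
      have hctx : ∀ ψ ∈ insert β₂ (insert (MSO.not e) Γ), ¬ ψ.FreeFO x' := by
        intro ψ hψ
        rcases hψ with rfl | hψ
        · exact hβ₂
        · rcases hψ with rfl | hψ
          · exact freeFO_empF
          · exact hΓx' ψ hψ
      have hne : Entails (insert β₂ (insert (MSO.not e) Γ)) (.not e) :=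
        entails_mem (Set.mem_insert_of_mem _ (Set.mem_insert _ _))
      have hgood2 : CoreDeriv (insert β₂ (insert (MSO.not e) Γ))
          (.prod x Ψ₂') (.prod x Ψ₃) := by
        have p1 : CoreDeriv (insert β₂ (insert (MSO.not e) Γ))
            (.prod x Ψ₂') (.prod x' (Ψ₂'.renFO x x')) := .c5 _ x x' Ψ₂' hΨ₂
        have p2 : StepDeriv (insert β₂ (insert (MSO.not e) Γ)) (Ψ₂'.renFO x x')
            (.ite e (Ψ₁'.renFO x x') (Ψ₂'.renFO x x')) :=
          .symm (stepIteFalseD _ _ hne)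
        have p3 := CoreDeriv.c4 (Γ := insert β₂ (insert (MSO.not e) Γ)) x' hctx p2
        have p4 : CoreDeriv (insert β₂ (insert (MSO.not e) Γ))
            (.prod x' (Step.ite e (Ψ₁'.renFO x x') (Ψ₂'.renFO x x')))
            (.prod x ((Step.ite e (Ψ₁'.renFO x x') (Ψ₂'.renFO x x')).renFO x' x)) := by
          refine .c5 _ x' x _ ?_
          intro hc
          rcases hc with hc | hc | hc
          · rw [occFO_empF] at hc; exact hxv hc
          · rcases occFO_renFO_S hc with h | h
            · exact hxx' h
            · exact h.1 rfl
          · rcases occFO_renFO_S hc with h | h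
            · exact hxx' h
            · exact h.1 rfl
        have hrw : (Step.ite e (Ψ₁'.renFO x x') (Ψ₂'.renFO x x')).renFO x' x = Ψ₃ := by
          show Step.ite (e.renFO x' x) ((Ψ₁'.renFO x x').renFO x' x)
            ((Ψ₂'.renFO x x').renFO x' x) = _
          rw [renFO_fix (by rw [occFO_empF]; exact hx'v), renFO_rt_S hΨ₁, renFO_rt_S hΨ₂]
        rw [hrw] at p4
        exact .trans p1 (.trans p3 p4)
      have p5 : CoreDeriv (insert β₂ (insert (MSO.not e) Γ)) (.ite φ₄ (.prod x Ψ₃) .zero)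
          (.prod x Ψ₃) := by
        refine .c8 _ _ ?_
        intro m hm
        rw [satAll_insert, satAll_insert] at hm
        rw [hφ₄, sat_or]
        exact Or.inr ⟨hm.2.1, hm.1⟩
      exact .trans hgood2 (.symm p5)
    · -- insert (.not β₂) (insert (.not e) Γ)
      refine .symm (iteFalseD _ _ ?_)
      intro m hm
      rw [satAll_insert, satAll_insert] at hm
      intro hc
      rw [hφ₄, sat_or] at hc
      replace hc : (e.Sat m ∧ β₁.Sat m) ∨ (¬ e.Sat m ∧ β₂.Sat m) := hc
      rcases hc with ⟨hc, _⟩ | ⟨_, hc⟩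
      · exact hm.2.1 hc
      · exact hm.1 hc

end Aux18d

/-- For every finite `Γ`, all sequences `X⃗`, `Y⃗` of
second-order variables, all MSO formulas `φ₁`, `φ₂` and step-wMSO formulas
`Ψ₁`, `Ψ₂`, there are `Z⃗`, `φ₃`, `Ψ₃` such that
`Γ ⊢ Σ_{X⃗}(φ₁ ? ∏_x Ψ₁ : 𝟬) + Σ_{Y⃗}(φ₂ ? ∏_x Ψ₂ : 𝟬) ≈ Σ_{Z⃗}(φ₃ ? ∏_x Ψ₃ : 𝟬)`
is derivable in the full core-wMSO proof system. -/
theorem statement18 {A R : Type} [Fintype A] [DecidableEq R]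
    (Γ : Set (MSO A)) (hfin : Γ.Finite)
    (Xs Ys : List ℕ) (φ₁ φ₂ : MSO A) (x : ℕ) (Ψ₁ Ψ₂ : Step A R) :
    ∃ (Zs : List ℕ) (φ₃ : MSO A) (Ψ₃ : Step A R),
      CoreDeriv Γ
        ((bigSumSO Xs (.ite φ₁ (.prod x Ψ₁) .zero)).add
          (bigSumSO Ys (.ite φ₂ (.prod x Ψ₂) .zero)))
        (bigSumSO Zs (.ite φ₃ (.prod x Ψ₃) .zero)) := by
  classical
  obtain ⟨B, hB⟩ := exists_bound Γ hfin
    (soVarsM φ₁ ∪ soVarsM φ₂ ∪ soVarsS Ψ₁ ∪ soVarsS Ψ₂ ∪ foVarsM φ₁ ∪ foVarsM φ₂ ∪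
      foVarsS Ψ₁ ∪ foVarsS Ψ₂ ∪ Xs.toFinset ∪ Ys.toFinset ∪ {x})
  set nX := Xs.length with hnX
  set nY := Ys.length with hnY
  set Xs' : List ℕ := (List.range nX).map (fun i => B + i) with hXs'
  set Ys' : List ℕ := (List.range nY).map (fun i => B + nX + i) with hYs'
  set Z₀ : ℕ := B + nX + nY with hZ₀
  set x' : ℕ := B + nX + nY + 1 with hx'
  set v₁ : ℕ := B + nX + nY + 2 with hv₁
  set v₂ : ℕ := B + nX + nY + 3 with hv₂
  -- freshness of large second-order variables
  have hfresh : ∀ Z, B ≤ Z → GF Γ Z ∧ Z ∉ Xs ∧ Z ∉ Ys ∧ ¬ φ₁.OccSO Z ∧ ¬ φ₂.OccSO Z ∧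
      ¬ Ψ₁.OccSO Z ∧ ¬ Ψ₂.OccSO Z ∧ Z ≠ x := by
    intro Z hZ
    obtain ⟨hns, hΓ⟩ := hB Z hZ
    refine ⟨fun ψ hψ => (hΓ ψ hψ).1,
      fun hc => hns (by simp [hc]),
      fun hc => hns (by simp [hc]),
      fun hc => hns (by simp [occSO_soVars hc]),
      fun hc => hns (by simp [occSO_soVars hc]),
      fun hc => hns (by simp [occSO_soVarsS hc]),
      fun hc => hns (by simp [occSO_soVarsS hc]),
      fun hc => hns (by simp [hc])⟩
  -- freshness of large first-order variables
  have hfreshFO : ∀ z, B ≤ z → (∀ ψ ∈ Γ, ¬ ψ.FreeFO z) ∧ ¬ φ₁.FreeFO z ∧ ¬ φ₂.FreeFO z ∧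
      ¬ Ψ₁.OccFO z ∧ ¬ Ψ₂.OccFO z ∧ z ≠ x := by
    intro z hz
    obtain ⟨hns, hΓ⟩ := hB z hz
    refine ⟨fun ψ hψ => (hΓ ψ hψ).2,
      fun hc => hns (by simp [freeFO_foVars hc]),
      fun hc => hns (by simp [freeFO_foVars hc]),
      fun hc => hns (by simp [occFO_foVarsS hc]),
      fun hc => hns (by simp [occFO_foVarsS hc]),
      fun hc => hns (by simp [hc])⟩
  have hXm : ∀ Z ∈ Xs', B ≤ Z ∧ Z < B + nX := by
    intro Z hZ
    rw [hXs'] at hZ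
    simp only [List.mem_map, List.mem_range] at hZ
    obtain ⟨i, hi, rfl⟩ := hZ
    omega
  have hYm : ∀ Z ∈ Ys', B + nX ≤ Z ∧ Z < B + nX + nY := by
    intro Z hZ
    rw [hYs'] at hZ
    simp only [List.mem_map, List.mem_range] at hZ
    obtain ⟨i, hi, rfl⟩ := hZ
    omega
  have hZm : ∀ Z ∈ Xs' ++ Ys', B ≤ Z ∧ Z < B + nX + nY := by
    intro Z hZ
    rcases List.mem_append.1 hZ with h | h
    · have := hXm Z h; omega
    · have := hYm Z h; omega
  have hndX : Xs'.Nodup := by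
    rw [hXs']
    exact List.Nodup.map (fun a b h => by omega) List.nodup_range
  have hndY : Ys'.Nodup := by
    rw [hYs']
    exact List.Nodup.map (fun a b h => by omega) List.nodup_range
  have hGFZ : ∀ Z ∈ Xs' ++ Ys', GF Γ Z := fun Z hZ => (hfresh Z (hZm Z hZ).1).1
  -- Stage A: rename the bound variables apart
  obtain ⟨α₁, Ψ₁', dA1, hoccα₁, hoccΨ₁', hfoα₁, hfoΨ₁'⟩ :=
    renameBig (Γ := Γ) (x := x) Xs' Xs φ₁ Ψ₁ (by rw [hXs']; simp [hnX]) hndX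
      (by
        intro Z hZ
        have hb := (hXm Z hZ).1
        obtain ⟨g1, g2, _, g4, _, g6, _, _⟩ := hfresh Z hb
        exact ⟨g1, g2, g4, g6⟩)
  obtain ⟨α₂, Ψ₂', dA2, hoccα₂, hoccΨ₂', hfoα₂, hfoΨ₂'⟩ :=
    renameBig (Γ := Γ) (x := x) Ys' Ys φ₂ Ψ₂ (by rw [hYs']; simp [hnY]) hndY
      (by
        intro Z hZ
        have hb := (hYm Z hZ).1
        obtain ⟨g1, _, g3, _, g5, _, g7, _⟩ := hfresh Z (by omega)
        exact ⟨g1, g3, g5, g7⟩)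
  -- Stage B: pad with the other block of fresh variables
  obtain ⟨β₁, dB1, hoccβ₁, hfoβ₁⟩ := padList (Γ := Γ) (x := x) (vp := v₁) Ys' α₁ Ψ₁' hndY
    (by
      intro Z hZ
      have hb := hYm Z hZ
      refine ⟨(hfresh Z (by omega)).1, ?_, ?_⟩
      · intro hc
        rcases hoccα₁ Z hc with h | h
        · exact (hfresh Z (by omega)).2.2.2.1 h
        · have := hXm Z h; omega
      · intro hc
        rcases hoccΨ₁' Z hc with h | h
        · exact (hfresh Z (by omega)).2.2.2.2.2.1 h
        · have := hXm Z h; omega)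
  obtain ⟨β₂, dB2, hoccβ₂, hfoβ₂⟩ := padList (Γ := Γ) (x := x) (vp := v₁) Xs' α₂ Ψ₂' hndX
    (by
      intro Z hZ
      have hb := hXm Z hZ
      refine ⟨(hfresh Z (by omega)).1, ?_, ?_⟩
      · intro hc
        rcases hoccα₂ Z hc with h | h
        · exact (hfresh Z (by omega)).2.2.2.2.1 h
        · have := hYm Z h; omega
      · intro hc
        rcases hoccΨ₂' Z hc with h | h
        · exact (hfresh Z (by omega)).2.2.2.2.2.2.1 h
        · have := hYm Z h; omega)
  -- assemble both sides as sums over Xs' ++ Ys'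
  have d1 : CoreDeriv Γ (bigSumSO Xs (NC x φ₁ Ψ₁))
      (bigSumSO (Xs' ++ Ys') (NC x β₁ Ψ₁')) := by
    have h := CoreDeriv.trans dA1
      (c11big Xs' (fun Z hZ => (hfresh Z (hXm Z hZ).1).1) dB1)
    rw [← bigSumSO_append] at h
    exact h
  have d2 : CoreDeriv Γ (bigSumSO Ys (NC x φ₂ Ψ₂))
      (bigSumSO (Xs' ++ Ys') (NC x β₂ Ψ₂')) := by
    have h := CoreDeriv.trans dA2
      (c11big Ys' (fun Z hZ => (hfresh Z (by have := hYm Z hZ; omega)).1) dB2)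
    rw [← bigSumSO_append] at h
    refine .trans h (commuteBlocks Xs' Ys' ?_ ?_)
    · intro Z hZ; exact (hfresh Z (by have := hYm Z hZ; omega)).1
    · intro Z hZ; exact (hfresh Z (hXm Z hZ).1).1
  -- occurrence facts about β₁, β₂, Ψ₁', Ψ₂' at Z₀
  have hβ₁Z : ¬ β₁.OccSO Z₀ := by
    intro hc
    rcases hoccβ₁ Z₀ hc with h | h
    · rcases hoccα₁ Z₀ h with h | h
      · exact (hfresh Z₀ (by omega)).2.2.2.1 h
      · have := hXm Z₀ h; omega
    · have := hYm Z₀ h; omega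
  have hβ₂Z : ¬ β₂.OccSO Z₀ := by
    intro hc
    rcases hoccβ₂ Z₀ hc with h | h
    · rcases hoccα₂ Z₀ h with h | h
      · exact (hfresh Z₀ (by omega)).2.2.2.2.1 h
      · have := hYm Z₀ h; omega
    · have := hXm Z₀ h; omega
  have hΨ₁Z : ¬ Ψ₁'.OccSO Z₀ := by
    intro hc
    rcases hoccΨ₁' Z₀ hc with h | h
    · exact (hfresh Z₀ (by omega)).2.2.2.2.2.1 h
    · have := hXm Z₀ h; omega
  have hΨ₂Z : ¬ Ψ₂'.OccSO Z₀ := by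
    intro hc
    rcases hoccΨ₂' Z₀ hc with h | h
    · exact (hfresh Z₀ (by omega)).2.2.2.2.2.2.1 h
    · have := hYm Z₀ h; omega
  have hZ₀nin : Z₀ ∉ Xs' ++ Ys' := by
    intro hc
    have := hZm Z₀ hc
    omega
  -- Stage D: combine the two sums via the selector variable Z₀
  have dD : CoreDeriv Γ
      ((bigSumSO (Xs' ++ Ys') (NC x β₁ Ψ₁')).add (bigSumSO (Xs' ++ Ys') (NC x β₂ Ψ₂')))
      (.sumSO Z₀ (.ite (selF v₁ v₂ Z₀)
        (.ite (empF v₁ Z₀) (bigSumSO (Xs' ++ Ys') (NC x β₁ Ψ₁'))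
          (bigSumSO (Xs' ++ Ys') (NC x β₂ Ψ₂'))) .zero)) := by
    refine stageD (by omega) (hfresh Z₀ (by omega)).1 ?_ ?_
    · rw [occSO_bigSum, occSO_NC]
      push_neg
      exact ⟨hZ₀nin, hβ₁Z, hΨ₁Z⟩
    · rw [occSO_bigSum, occSO_NC]
      push_neg
      exact ⟨hZ₀nin, hβ₂Z, hΨ₂Z⟩
  -- Stage E: merge everything under the binders
  have hx'B : B ≤ x' := by omega
  have hmrg : CoreDeriv Γ (.ite (empF v₁ Z₀) (NC x β₁ Ψ₁') (NC x β₂ Ψ₂'))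
      (NC x (((empF v₁ Z₀).and β₁).or ((MSO.not (empF v₁ Z₀)).and β₂))
        (.ite (empF v₁ Z₀) Ψ₁' Ψ₂')) := by
    refine mergeN (fun ψ hψ => (hfreshFO x' hx'B).1 ψ hψ) ?_ ?_ ?_ ?_ ?_ ?_ ?_
    · intro hc
      exact (hfreshFO x' hx'B).2.1 (hfoα₁ x' (hfoβ₁ x' hc))
    · intro hc
      exact (hfreshFO x' hx'B).2.2.1 (hfoα₂ x' (hfoβ₂ x' hc))
    · intro hc
      exact (hfreshFO x' hx'B).2.2.2.1 (hfoΨ₁' x' hc)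
    · intro hc
      exact (hfreshFO x' hx'B).2.2.2.2.1 (hfoΨ₂' x' hc)
    · exact fun hc => (hfreshFO x' hx'B).2.2.2.2.2 hc.symm
    · exact fun hc => (hfreshFO v₁ (by omega)).2.2.2.2.2 hc.symm
    · omega
  set φ₄ : MSO A := ((empF v₁ Z₀).and β₁).or ((MSO.not (empF v₁ Z₀)).and β₂) with hφ₄d
  set Ψ₃ : Step A R := .ite (empF v₁ Z₀) Ψ₁' Ψ₂' with hΨ₃d
  have dE1 : CoreDeriv Γ
      (.ite (empF v₁ Z₀) (bigSumSO (Xs' ++ Ys') (NC x β₁ Ψ₁'))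
        (bigSumSO (Xs' ++ Ys') (NC x β₂ Ψ₂')))
      (bigSumSO (Xs' ++ Ys') (.ite (empF v₁ Z₀) (NC x β₁ Ψ₁') (NC x β₂ Ψ₂'))) := by
    refine c15big _ ?_
    intro Z hZ
    refine ⟨hGFZ Z hZ, ?_⟩
    rw [freeSO_empF]
    have := hZm Z hZ
    omega
  have i1 : CoreDeriv Γ
      (.ite (selF v₁ v₂ Z₀)
        (.ite (empF v₁ Z₀) (bigSumSO (Xs' ++ Ys') (NC x β₁ Ψ₁'))
          (bigSumSO (Xs' ++ Ys') (NC x β₂ Ψ₂'))) .zero)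
      (.ite (selF v₁ v₂ Z₀) (bigSumSO (Xs' ++ Ys') (NC x φ₄ Ψ₃))
        (bigSumSO (Xs' ++ Ys') .zero)) :=
    .congIte _ (.trans dE1 (c11big _ hGFZ hmrg)) (zeroSumBig _ hGFZ)
  have i2 : CoreDeriv Γ
      (.ite (selF v₁ v₂ Z₀) (bigSumSO (Xs' ++ Ys') (NC x φ₄ Ψ₃))
        (bigSumSO (Xs' ++ Ys') .zero))
      (bigSumSO (Xs' ++ Ys') (.ite (selF v₁ v₂ Z₀) (NC x φ₄ Ψ₃) .zero)) := by
    refine c15big _ ?_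
    intro Z hZ
    refine ⟨hGFZ Z hZ, ?_⟩
    rw [freeSO_selF]
    have := hZm Z hZ
    omega
  have i3 : CoreDeriv Γ
      (bigSumSO (Xs' ++ Ys') (.ite (selF v₁ v₂ Z₀) (NC x φ₄ Ψ₃) .zero))
      (bigSumSO (Xs' ++ Ys') (NC x ((selF v₁ v₂ Z₀).and φ₄) Ψ₃)) :=
    c11big _ hGFZ (andIteD Γ _ _ _)
  refine ⟨Z₀ :: (Xs' ++ Ys'), (selF v₁ v₂ Z₀).and φ₄, Ψ₃, ?_⟩
  exact .trans (.congAdd d1 d2)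
    (.trans dD (.c11 Z₀ (hfresh Z₀ (by omega)).1 (.trans i1 (.trans i2 i3))))

end WMSO
end

section
/- For every finite set Γ of MSO formulas and every core-wMSO formula Φ, there exists a core-wMSO formula Φ' in second normal form (i.e., in which the binary operator + does not occur) such that Γ ⊢ Φ ≈ Φ' is derivable in the core-wMSO proof system. -/
namespace WMSO

variable {A R : Type}

/-! ### Auxiliary development for Statement 19 -/

/-- `X = ∅`. -/
def phiE (X : ℕ) : MSO A := .allFO 0 (.not (.mem 0 X))

/-- `X = full`. -/
def phiF (X : ℕ) : MSO A := .allFO 0 (.mem 0 X)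

lemma phiE_sat (m : WVal A) (X : ℕ) :
    (phiE X : MSO A).Sat m ↔ ∀ i : Fin m.word.length, i ∉ m.so X := by
  simp [phiE, MSO.Sat, WVal.updFO]
  exact Iff.rfl

lemma phiF_sat (m : WVal A) (X : ℕ) :
    (phiF X : MSO A).Sat m ↔ ∀ i : Fin m.word.length, i ∈ m.so X := by
  simp [phiF, MSO.Sat, WVal.updFO]
  exact Iff.rfl

lemma phiE_sat_upd (m : WVal A) (X : ℕ) (I : Finset (Fin m.word.length)) :
    (phiE X : MSO A).Sat (m.updSO X I) ↔ I = ∅ := by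
  rw [phiE_sat]
  simp [WVal.updSO, Finset.eq_empty_iff_forall_notMem]
  exact Iff.rfl

lemma phiF_sat_upd (m : WVal A) (X : ℕ) (I : Finset (Fin m.word.length)) :
    (phiF X : MSO A).Sat (m.updSO X I) ↔ I = Finset.univ := by
  rw [phiF_sat]
  simp [WVal.updSO, Finset.eq_univ_iff_forall]
  exact Iff.rfl

lemma wval_len_pos (m : WVal A) : 0 < m.word.length :=
  List.length_pos_iff.mpr m.nonempty

lemma entails_self (Γ : Set (MSO A)) (φ : MSO A) : Entails (insert φ Γ) φ :=
  fun m hm => hm φ (Set.mem_insert _ _)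

lemma entails_notF (Γ : Set (MSO A)) (X : ℕ) :
    Entails (insert (phiE X) Γ) (.not (phiF X)) := by
  intro m hm hF
  have hE := hm (phiE X) (Set.mem_insert _ _)
  rw [phiE_sat] at hE
  rw [phiF_sat] at hF
  exact hE ⟨0, wval_len_pos m⟩ (hF ⟨0, wval_len_pos m⟩)

/-- `Γ ⊨ ¬ψ` implies `Γ ⊢ ψ ? Φ₁ : Φ₂ ≈ Φ₂`. -/
lemma ite_false_elim {Γ : Set (MSO A)} {ψ : MSO A} (Φ₁ Φ₂ : Core A R)
    (h : Entails Γ (.not ψ)) : CoreDeriv Γ (.ite ψ Φ₁ Φ₂) Φ₂ :=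
  .trans (.symm (.c7 Γ ψ Φ₂ Φ₁)) (.c8 _ _ h)

/-- The key inner step: `(E ? Φ₁ : 𝟬) + (F ? Φ₂ : 𝟬) ≈ E ? Φ₁ : (F ? Φ₂ : 𝟬)`
whenever `Γ, E ⊨ ¬F`. -/
lemma inner_step {Γ : Set (MSO A)} {E F : MSO A} (Φ₁ Φ₂ : Core A R)
    (hEF : Entails (insert E Γ) (.not F)) :
    CoreDeriv Γ ((Core.ite E Φ₁ .zero).add (.ite F Φ₂ .zero))
      (.ite E Φ₁ (.ite F Φ₂ .zero)) := by
  set B : Core A R := .ite F Φ₂ .zero with hB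
  have d0 : CoreDeriv Γ ((Core.ite E Φ₁ .zero).add B)
      (.ite E (Φ₁.add B) (Core.zero.add B)) := .c10 Γ E Φ₁ .zero B
  have dT : CoreDeriv (insert E Γ) (Φ₁.add B) (.ite E Φ₁ B) := by
    have hB0 : CoreDeriv (insert E Γ) B Core.zero := ite_false_elim Φ₂ .zero hEF
    have : CoreDeriv (insert E Γ) (Φ₁.add B) Φ₁ :=
      .trans (.congAdd (.refl _ Φ₁) hB0) (.c1 _ Φ₁)
    exact .trans this (.symm (.c8 Φ₁ B (entails_self Γ E)))
  have dF : CoreDeriv (insert (.not E) Γ) (Core.zero.add B) (.ite E Φ₁ B) := by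
    have h1 : CoreDeriv (insert (.not E) Γ) (Core.zero.add B) B :=
      .trans (.c2 _ _ _) (.c1 _ B)
    have h2 : CoreDeriv (insert (.not E) Γ) (.ite E Φ₁ B) B :=
      ite_false_elim Φ₁ B (entails_self Γ (.not E))
    exact .trans h1 (.symm h2)
  exact .trans d0 (.c9 dT dF)

/-! Bounds on occurring second-order variables, to get fresh variables. -/

def MSO.soB : MSO A → ℕ
  | .top => 0
  | .pred _ _ => 0
  | .le _ _ => 0
  | .mem _ Z => Z + 1
  | .not φ => φ.soB
  | .and φ ψ => max φ.soB ψ.soB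
  | .allFO _ φ => φ.soB
  | .allSO Z φ => max (Z + 1) φ.soB

lemma MSO.not_occSO_of_le {Y : ℕ} (φ : MSO A) (h : φ.soB ≤ Y) : ¬ φ.OccSO Y := by
  induction φ with
  | top => simp [MSO.OccSO]
  | pred a z => simp [MSO.OccSO]
  | le z w => simp [MSO.OccSO]
  | mem z Z => simp [MSO.soB] at h; simp [MSO.OccSO]; omega
  | not φ ih => exact ih h
  | and φ ψ ih₁ ih₂ =>
      simp [MSO.soB] at h
      simp [MSO.OccSO]
      exact ⟨ih₁ h.1, ih₂ h.2⟩
  | allFO z φ ih => exact ih h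
  | allSO Z φ ih =>
      simp [MSO.soB] at h
      simp [MSO.OccSO]
      exact ⟨by omega, ih h.2⟩

def Step.soB : Step A R → ℕ
  | .const _ => 0
  | .ite φ Ψ₁ Ψ₂ => max φ.soB (max Ψ₁.soB Ψ₂.soB)

lemma Step.not_occSO_of_le {Y : ℕ} (Ψ : Step A R) (h : Ψ.soB ≤ Y) : ¬ Ψ.OccSO Y := by
  induction Ψ with
  | const r => simp [Step.OccSO]
  | ite φ Ψ₁ Ψ₂ ih₁ ih₂ =>
      simp [Step.soB] at h
      simp [Step.OccSO]
      exact ⟨MSO.not_occSO_of_le φ h.1, ih₁ h.2.1, ih₂ h.2.2⟩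

def Core.soB : Core A R → ℕ
  | .zero => 0
  | .prod _ Ψ => Ψ.soB
  | .ite φ Φ₁ Φ₂ => max φ.soB (max Φ₁.soB Φ₂.soB)
  | .add Φ₁ Φ₂ => max Φ₁.soB Φ₂.soB
  | .sumFO _ Φ => Φ.soB
  | .sumSO Z Φ => max (Z + 1) Φ.soB

lemma Core.not_occSO_of_le {Y : ℕ} (Φ : Core A R) (h : Φ.soB ≤ Y) : ¬ Φ.OccSO Y := by
  induction Φ with
  | zero => simp [Core.OccSO]
  | prod x Ψ => exact Step.not_occSO_of_le Ψ h
  | ite φ Φ₁ Φ₂ ih₁ ih₂ =>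
      simp [Core.soB] at h
      simp [Core.OccSO]
      exact ⟨MSO.not_occSO_of_le φ h.1, ih₁ h.2.1, ih₂ h.2.2⟩
  | add Φ₁ Φ₂ ih₁ ih₂ =>
      simp [Core.soB] at h
      simp [Core.OccSO]
      exact ⟨ih₁ h.1, ih₂ h.2⟩
  | sumFO x Φ ih => exact ih h
  | sumSO Z Φ ih =>
      simp [Core.soB] at h
      simp [Core.OccSO]
      exact ⟨by omega, ih h.2⟩

/-- Eliminating one top-level `+` between `+`-free formulas, in the empty
context. -/
lemma add_elim (Φ₁ Φ₂ : Core A R) (h₁ : Φ₁.noAdd) (h₂ : Φ₂.noAdd) :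
    ∃ Φ' : Core A R, Φ'.noAdd ∧ CoreDeriv (∅ : Set (MSO A)) (Φ₁.add Φ₂) Φ' := by
  set X : ℕ := max Φ₁.soB Φ₂.soB with hX
  have hO₁ : ¬ Φ₁.OccSO X := Core.not_occSO_of_le Φ₁ (le_max_left _ _)
  have hO₂ : ¬ Φ₂.OccSO X := Core.not_occSO_of_le Φ₂ (le_max_right _ _)
  have hEu : ∀ m : WVal A, SatAll (∅ : Set (MSO A)) m →
      ∃! I : Finset (Fin m.word.length), (phiE X : MSO A).Sat (m.updSO X I) := by
    intro m _
    refine ⟨∅, ?_, ?_⟩ <;> simp [phiE_sat_upd]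
  have hFu : ∀ m : WVal A, SatAll (∅ : Set (MSO A)) m →
      ∃! I : Finset (Fin m.word.length), (phiF X : MSO A).Sat (m.updSO X I) := by
    intro m _
    refine ⟨Finset.univ, ?_, ?_⟩ <;> simp [phiF_sat_upd]
  have d1 : CoreDeriv (∅ : Set (MSO A)) Φ₁ (.sumSO X (.ite (phiE X) Φ₁ .zero)) :=
    .c16 ∅ X (phiE X) Φ₁ hEu hO₁
  have d2 : CoreDeriv (∅ : Set (MSO A)) Φ₂ (.sumSO X (.ite (phiF X) Φ₂ .zero)) :=
    .c16 ∅ X (phiF X) Φ₂ hFu hO₂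
  have d3 : CoreDeriv (∅ : Set (MSO A)) (Φ₁.add Φ₂)
      ((Core.sumSO X (.ite (phiE X) Φ₁ .zero)).add (.sumSO X (.ite (phiF X) Φ₂ .zero))) :=
    .congAdd d1 d2
  have d4 : CoreDeriv (∅ : Set (MSO A))
      ((Core.sumSO X (.ite (phiE X) Φ₁ .zero)).add (.sumSO X (.ite (phiF X) Φ₂ .zero)))
      (.sumSO X ((Core.ite (phiE X) Φ₁ .zero).add (.ite (phiF X) Φ₂ .zero))) :=
    .symm (.c14 ∅ X _ _)
  have d5 : CoreDeriv (∅ : Set (MSO A))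
      (.sumSO X ((Core.ite (phiE X) Φ₁ .zero).add (.ite (phiF X) Φ₂ .zero)))
      (.sumSO X (.ite (phiE X) Φ₁ (.ite (phiF X) Φ₂ .zero))) :=
    .c11 X (by simp) (inner_step Φ₁ Φ₂ (entails_notF ∅ X))
  refine ⟨.sumSO X (.ite (phiE X) Φ₁ (.ite (phiF X) Φ₂ .zero)), ?_, ?_⟩
  · exact ⟨h₁, h₂, trivial⟩
  · exact .trans d3 (.trans d4 d5)

/-- Normalization in the empty context. -/
lemma normalize (Φ : Core A R) :
    ∃ Φ' : Core A R, Φ'.noAdd ∧ CoreDeriv (∅ : Set (MSO A)) Φ Φ' := by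
  induction Φ with
  | zero => exact ⟨.zero, trivial, .refl _ _⟩
  | prod x Ψ => exact ⟨.prod x Ψ, trivial, .refl _ _⟩
  | ite φ Φ₁ Φ₂ ih₁ ih₂ =>
      obtain ⟨Φ₁', h₁, d₁⟩ := ih₁
      obtain ⟨Φ₂', h₂, d₂⟩ := ih₂
      exact ⟨.ite φ Φ₁' Φ₂', ⟨h₁, h₂⟩, .congIte φ d₁ d₂⟩
  | add Φ₁ Φ₂ ih₁ ih₂ =>
      obtain ⟨Φ₁', h₁, d₁⟩ := ih₁
      obtain ⟨Φ₂', h₂, d₂⟩ := ih₂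
      obtain ⟨Φ', h', d'⟩ := add_elim Φ₁' Φ₂' h₁ h₂
      exact ⟨Φ', h', .trans (.congAdd d₁ d₂) d'⟩
  | sumFO x Φ ih =>
      obtain ⟨Φ', h, d⟩ := ih
      exact ⟨.sumFO x Φ', h, .c11fo x (by simp) d⟩
  | sumSO X Φ ih =>
      obtain ⟨Φ', h, d⟩ := ih
      exact ⟨.sumSO X Φ', h, .c11 X (by simp) d⟩

/-- Weakening a derivation from the empty context to any finite context. -/
lemma lift_finite {Φ₁ Φ₂ : Core A R} (h : CoreDeriv (∅ : Set (MSO A)) Φ₁ Φ₂)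
    (Γ : Set (MSO A)) (hfin : Γ.Finite) : CoreDeriv Γ Φ₁ Φ₂ := by
  exact Set.Finite.induction_on (motive := fun s _ => CoreDeriv s Φ₁ Φ₂) Γ hfin h (fun _ _ ih => .c6 _ ih)

/-- For every finite `Γ` and every core-wMSO formula `Φ`,
there is a core-wMSO formula `Φ'` in second normal form (no occurrence of the
binary `+`) such that `Γ ⊢ Φ ≈ Φ'` is derivable in the full core-wMSO proof
system. -/
theorem statement19 {A R : Type} [Fintype A] [DecidableEq R]
    (Γ : Set (MSO A)) (hfin : Γ.Finite) (Φ : Core A R) :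
    ∃ Φ' : Core A R, Φ'.noAdd ∧ CoreDeriv Γ Φ Φ' := by
  obtain ⟨Φ', h, d⟩ := normalize Φ
  exact ⟨Φ', h, lift_finite d Γ hfin⟩

end WMSO
end
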